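/- arXiv:1406.1779 — 9 statements merged into one kernel-verified Lean document; each statement's English description precedes it below -/
import Mathlib

section
/- (Fréchet–Hoeffding bound.) Let X₁ and X₂ be real-valued random variables defined on a common probability space, with cumulative distribution functions F₁ and F₂ respectively, each with finite nonzero variance, and suppose X₁X₂, F₁^{-1}(U)F₂^{-1}(U) and F₁^{-1}(U)F₂^{-1}(1−U) are integrable, where U is uniformly distributed on [0,1]. Then Corr(F₁^{-1}(U), F₂^{-1}(1−U)) ≤ Corr(X₁, X₂) ≤ Corr(F₁^{-1}(U), F₂^{-1}(U)). -/
open MeasureTheory ProbabilityTheory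

/-- The pseudoinverse `F⁻¹(u) = inf{x : F(x) ≥ u}` of a cdf `F`. -/
noncomputable def pseudoInv (F : ℝ → ℝ) (u : ℝ) : ℝ := sInf {x : ℝ | u ≤ F x}

/-- Correlation of two real random variables:
`Corr(X,Y) = (E[XY] − E[X]E[Y]) / √(Var(X)·Var(Y))`. -/
noncomputable def corr {Ω : Type*} [MeasurableSpace Ω] (μ : Measure Ω) (X Y : Ω → ℝ) : ℝ :=
  ((∫ ω, X ω * Y ω ∂μ) - (∫ ω, X ω ∂μ) * (∫ ω, Y ω ∂μ)) /
    Real.sqrt (variance X μ * variance Y μ)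

/-!
Writing `a = ∫ (1{s < a} - 1{s < 0}) ds` for `a = X₁ ω` and `a = X₂ ω` and applying Fubini gives
Hoeffding's identity `E[X₁X₂] = ∬ K(s, t) ds dt`, where `K(s, t)` is the joint survival
probability `P(X₁ > s, X₂ > t)` up to terms that depend only on the two marginal laws.
The variables `F₁⁻¹(U)`, `F₂⁻¹(U)` and `F₂⁻¹(1 - U)` have the laws of `X₁`, `X₂` and `X₂`, so all
three correlations share their means and variances, and the two inequalities reduce to the
Fréchet bounds `max(P A + P B - 1, 0) ≤ P(A ∩ B) ≤ min(P A, P B)`: the comonotone coupling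
`(F₁⁻¹(U), F₂⁻¹(U))` attains the upper one and the countermonotone coupling
`(F₁⁻¹(U), F₂⁻¹(1 - U))` the lower one.
-/

open Set

noncomputable def layer (a s : ℝ) : ℝ := (Iio a).indicator 1 s - (Iio 0).indicator 1 s

lemma measurable_layer : Measurable (Function.uncurry layer) := by
  unfold layer Function.uncurry
  simp only [indicator_apply, mem_Iio, Pi.one_apply]
  exact (Measurable.ite (measurableSet_lt measurable_snd measurable_fst) measurable_const
    measurable_const).sub (Measurable.ite (measurableSet_lt measurable_snd measurable_const)
    measurable_const measurable_const)

lemma layer_eq_indicator_sub_indicator (a : ℝ) :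
    layer a = (Ico 0 a).indicator 1 - (Ico a 0).indicator 1 := by
  funext s
  simp only [layer, indicator_apply, mem_Iio, mem_Ico, Pi.sub_apply, Pi.one_apply]
  split_ifs <;> grind

lemma abs_layer (a : ℝ) :
    (fun s => |layer a s|) = (Ico 0 a).indicator 1 + (Ico a 0).indicator 1 := by
  funext s
  simp only [layer, indicator_apply, mem_Iio, mem_Ico, Pi.add_apply, Pi.one_apply]
  split_ifs <;> grind

lemma integrable_indicator_one_Ico (a b : ℝ) :
    Integrable ((Ico a b).indicator (1 : ℝ → ℝ)) :=
  (integrable_indicator_iff measurableSet_Ico).2 (integrableOn_const measure_Ico_lt_top.ne)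

lemma integrable_layer (a : ℝ) : Integrable (layer a) := by
  rw [layer_eq_indicator_sub_indicator]
  exact (integrable_indicator_one_Ico 0 a).sub (integrable_indicator_one_Ico a 0)

lemma integral_layer (a : ℝ) : ∫ s, layer a s = a := by
  rw [layer_eq_indicator_sub_indicator, integral_sub' (integrable_indicator_one_Ico 0 a)
    (integrable_indicator_one_Ico a 0), integral_indicator_one measurableSet_Ico,
    integral_indicator_one measurableSet_Ico, Real.volume_real_Ico, Real.volume_real_Ico,
    sub_zero, zero_sub, max_zero_sub_max_neg_zero_eq_self]

lemma integral_abs_layer (a : ℝ) : ∫ s, |layer a s| = |a| := by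
  rw [abs_layer, integral_add' (integrable_indicator_one_Ico 0 a)
    (integrable_indicator_one_Ico a 0), integral_indicator_one measurableSet_Ico,
    integral_indicator_one measurableSet_Ico, Real.volume_real_Ico, Real.volume_real_Ico,
    sub_zero, zero_sub, max_zero_add_max_neg_zero_eq_abs_self]

section LayerKernel

variable {Ω : Type*} [MeasurableSpace Ω] {μ : Measure Ω} {X Y : Ω → ℝ}

lemma integrable_layer_mul_layer [SFinite μ] (hX : AEMeasurable X μ) (hY : AEMeasurable Y μ)
    (hXY : Integrable (fun ω => X ω * Y ω) μ) :
    Integrable (fun q : Ω × ℝ × ℝ => layer (X q.1) q.2.1 * layer (Y q.1) q.2.2)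
      (μ.prod (volume.prod volume)) := by
  have hmeas : AEStronglyMeasurable
      (fun q : Ω × ℝ × ℝ => layer (X q.1) q.2.1 * layer (Y q.1) q.2.2)
      (μ.prod (volume.prod volume)) :=
    ((measurable_layer.comp_aemeasurable (hX.comp_fst.prodMk measurable_snd.fst.aemeasurable)).mul
      (measurable_layer.comp_aemeasurable
        (hY.comp_fst.prodMk measurable_snd.snd.aemeasurable))).aestronglyMeasurable
  refine (integrable_prod_iff hmeas).2 ⟨ae_of_all _ fun ω =>
    (integrable_layer (X ω)).mul_prod (integrable_layer (Y ω)), ?_⟩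
  refine hXY.norm.congr (ae_of_all _ fun ω => ?_)
  simp only [norm_mul, Real.norm_eq_abs]
  rw [integral_prod_mul (fun s => |layer (X ω) s|) (fun t => |layer (Y ω) t|),
    integral_abs_layer, integral_abs_layer]

variable (μ X Y) in
noncomputable def layerKernel (p : ℝ × ℝ) : ℝ := ∫ ω, layer (X ω) p.1 * layer (Y ω) p.2 ∂μ

lemma integrable_layerKernel [SFinite μ] (hX : AEMeasurable X μ) (hY : AEMeasurable Y μ)
    (hXY : Integrable (fun ω => X ω * Y ω) μ) :
    Integrable (layerKernel μ X Y) (volume.prod volume) :=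
  (integrable_layer_mul_layer hX hY hXY).integral_prod_right

lemma integral_layerKernel [SFinite μ] (hX : AEMeasurable X μ) (hY : AEMeasurable Y μ)
    (hXY : Integrable (fun ω => X ω * Y ω) μ) :
    ∫ p, layerKernel μ X Y p ∂(volume.prod volume) = ∫ ω, X ω * Y ω ∂μ := by
  simp only [layerKernel]
  rw [← integral_integral_swap (integrable_layer_mul_layer hX hY hXY)]
  refine integral_congr_ae (ae_of_all _ fun ω => ?_)
  dsimp only
  rw [integral_prod_mul (layer (X ω)) (layer (Y ω)), integral_layer, integral_layer]

lemma integral_indicator_one₀ {A : Set Ω} (hA : NullMeasurableSet A μ) :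
    ∫ ω, A.indicator 1 ω ∂μ = μ.real A := by
  rw [integral_indicator₀ hA, Pi.one_def, setIntegral_const, smul_eq_mul, mul_one]

lemma integral_indicator_sub_mul_indicator_sub [IsProbabilityMeasure μ] {A B : Set Ω}
    (hA : NullMeasurableSet A μ) (hB : NullMeasurableSet B μ) (a b : ℝ) :
    ∫ ω, (A.indicator 1 ω - a) * (B.indicator 1 ω - b) ∂μ =
      μ.real (A ∩ B) - b * μ.real A - a * μ.real B + a * b := by
  have hintA : Integrable (A.indicator (1 : Ω → ℝ)) μ := (integrable_const 1).indicator₀ hA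
  have hintB : Integrable (B.indicator (1 : Ω → ℝ)) μ := (integrable_const 1).indicator₀ hB
  have hintAB : Integrable ((A ∩ B).indicator (1 : Ω → ℝ)) μ :=
    (integrable_const 1).indicator₀ (hA.inter hB)
  have hexpand : (fun ω => (A.indicator 1 ω - a) * (B.indicator 1 ω - b)) =
      fun ω => (A ∩ B).indicator (1 : Ω → ℝ) ω - b * A.indicator 1 ω - a * B.indicator 1 ω
        + a * b := by
    funext ω
    rw [inter_indicator_one, Pi.mul_apply]
    ring
  rw [hexpand, integral_add, integral_sub, integral_sub, integral_const_mul, integral_const_mul,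
    integral_const, integral_indicator_one₀ (hA.inter hB), integral_indicator_one₀ hA,
    integral_indicator_one₀ hB, probReal_univ, one_smul]
  all_goals fun_prop

lemma layerKernel_eq [IsProbabilityMeasure μ] (hX : AEMeasurable X μ) (hY : AEMeasurable Y μ)
    (s t : ℝ) :
    layerKernel μ X Y (s, t) = μ.real (X ⁻¹' Ioi s ∩ Y ⁻¹' Ioi t)
      - (Iio 0).indicator 1 t * μ.real (X ⁻¹' Ioi s)
      - (Iio 0).indicator 1 s * μ.real (Y ⁻¹' Ioi t)
      + (Iio 0).indicator 1 s * (Iio 0).indicator 1 t := by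
  have hlayer (Z : Ω → ℝ) (r : ℝ) (ω : Ω) :
      layer (Z ω) r = (Z ⁻¹' Ioi r).indicator 1 ω - (Iio 0).indicator 1 r :=
    rfl
  simp only [layerKernel, hlayer]
  exact integral_indicator_sub_mul_indicator_sub (hX.nullMeasurable measurableSet_Ioi)
    (hY.nullMeasurable measurableSet_Ioi) _ _

end LayerKernel

section Comparison

variable {Ω Ω' : Type*} [MeasurableSpace Ω] [MeasurableSpace Ω'] {μ : Measure Ω}
  {μ' : Measure Ω'} {X Y : Ω → ℝ} {X' Y' : Ω' → ℝ}

lemma integral_mul_le_of_measureReal_inter_le [IsProbabilityMeasure μ]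
    [IsProbabilityMeasure μ'] (hX : IdentDistrib X X' μ μ') (hY : IdentDistrib Y Y' μ μ')
    (hXY : Integrable (fun ω => X ω * Y ω) μ) (hXY' : Integrable (fun ω => X' ω * Y' ω) μ')
    (h : ∀ s t, μ.real (X ⁻¹' Ioi s ∩ Y ⁻¹' Ioi t) ≤ μ'.real (X' ⁻¹' Ioi s ∩ Y' ⁻¹' Ioi t)) :
    ∫ ω, X ω * Y ω ∂μ ≤ ∫ ω, X' ω * Y' ω ∂μ' := by
  rw [← integral_layerKernel hX.aemeasurable_fst hY.aemeasurable_fst hXY,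
    ← integral_layerKernel hX.aemeasurable_snd hY.aemeasurable_snd hXY']
  refine integral_mono (integrable_layerKernel hX.aemeasurable_fst hY.aemeasurable_fst hXY)
    (integrable_layerKernel hX.aemeasurable_snd hY.aemeasurable_snd hXY') fun ⟨s, t⟩ => ?_
  have hXs : μ.real (X ⁻¹' Ioi s) = μ'.real (X' ⁻¹' Ioi s) := by
    rw [measureReal_def, measureReal_def, hX.measure_mem_eq measurableSet_Ioi]
  have hYt : μ.real (Y ⁻¹' Ioi t) = μ'.real (Y' ⁻¹' Ioi t) := by
    rw [measureReal_def, measureReal_def, hY.measure_mem_eq measurableSet_Ioi]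
  rw [layerKernel_eq hX.aemeasurable_fst hY.aemeasurable_fst,
    layerKernel_eq hX.aemeasurable_snd hY.aemeasurable_snd, hXs, hYt]
  linarith [h s t]

lemma corr_le_corr_of_integral_mul_le (hX : IdentDistrib X X' μ μ') (hY : IdentDistrib Y Y' μ μ')
    (h : ∫ ω, X ω * Y ω ∂μ ≤ ∫ ω, X' ω * Y' ω ∂μ') : corr μ X Y ≤ corr μ' X' Y' := by
  unfold corr
  rw [hX.integral_eq, hY.integral_eq, hX.variance_eq, hY.variance_eq]
  gcongr

lemma max_add_sub_one_le_measureReal_inter [IsProbabilityMeasure μ] {A B : Set Ω}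
    (hB : NullMeasurableSet B μ) : max (μ.real A + μ.real B - 1) 0 ≤ μ.real (A ∩ B) :=
  max_le (by linarith [measureReal_union_add_inter₀ (s := A) hB,
    measureReal_le_one (μ := μ) (s := A ∪ B)]) measureReal_nonneg

end Comparison

-- The uniform law is taken on the open interval: `pseudoInv F` is monotone only there, its values
-- at `0` and `1` being junk (`sInf` of an unbounded or empty set).
local notation "𝕌" => (volume.restrict (Ioo (0 : ℝ) 1))

section Uniform

instance : IsProbabilityMeasure 𝕌 :=
  ⟨by rw [Measure.restrict_apply_univ, Real.volume_Ioo, sub_zero, ENNReal.ofReal_one]⟩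

lemma uniform_eq_volume_of_subset {s : Set ℝ} (hs : s ⊆ Icc 0 1) : 𝕌 s = volume s := by
  rw [Measure.restrict_congr_set Ioo_ae_eq_Icc, Measure.restrict_apply' measurableSet_Icc,
    inter_eq_left.2 hs]

lemma uniform_real_Ioo {a b : ℝ} (ha : 0 ≤ a) (hb : b ≤ 1) :
    Measure.real 𝕌 (Ioo a b) = max (b - a) 0 := by
  rw [measureReal_def, uniform_eq_volume_of_subset (Ioo_subset_Icc_self.trans
    (Icc_subset_Icc ha hb)), ← measureReal_def, Real.volume_real_Ioo]

lemma measurePreserving_one_sub_uniform : MeasurePreserving (fun u : ℝ => 1 - u) 𝕌 𝕌 := by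
  have h := (Measure.measurePreserving_sub_left volume (1 : ℝ)).restrict_preimage
    (measurableSet_Ioo (a := 0) (b := 1))
  rwa [preimage_const_sub_Ioo, sub_self, sub_zero] at h

lemma identDistrib_comp_one_sub {f : ℝ → ℝ} (hf : AEMeasurable f 𝕌) :
    IdentDistrib (fun u => f (1 - u)) f 𝕌 𝕌 where
  aemeasurable_fst := hf.comp_quasiMeasurePreserving
    measurePreserving_one_sub_uniform.quasiMeasurePreserving
  aemeasurable_snd := hf
  map_eq := by
    have hr := measurePreserving_one_sub_uniform
    rw [show (fun u => f (1 - u)) = f ∘ fun u => 1 - u from rfl,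
      ← AEMeasurable.map_map_of_aemeasurable (by rwa [hr.map_eq]) hr.measurable.aemeasurable,
      hr.map_eq]

end Uniform

section Quantile

variable {ρ : Measure ℝ}

lemma pseudoInv_cdf_le_iff {u : ℝ} (hu : u ∈ Ioo 0 1) (x : ℝ) :
    pseudoInv (cdf ρ) u ≤ x ↔ u ≤ cdf ρ x := by
  obtain ⟨y, hy⟩ := ((tendsto_cdf_atTop ρ).eventually (lt_mem_nhds hu.2)).exists
  obtain ⟨a, ha⟩ :=
    Filter.eventually_atBot.1 ((tendsto_cdf_atBot ρ).eventually (gt_mem_nhds hu.1))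
  have hbdd : BddBelow {x | u ≤ cdf ρ x} :=
    ⟨a, fun z hz => le_of_not_gt fun hza => (ha z hza.le).not_ge hz⟩
  refine ⟨fun h => ?_, fun h => csInf_le hbdd h⟩
  refine ge_of_tendsto (((cdf ρ).right_continuous x).mono Ioi_subset_Ici_self)
    (eventually_nhdsWithin_of_forall fun z (hz : x < z) => ?_)
  obtain ⟨w, hw, hwz⟩ := exists_lt_of_csInf_lt ⟨y, hy.le⟩ (h.trans_lt hz)
  exact hw.trans (monotone_cdf ρ hwz.le)

lemma lt_pseudoInv_cdf_iff {u : ℝ} (hu : u ∈ Ioo 0 1) (x : ℝ) :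
    x < pseudoInv (cdf ρ) u ↔ cdf ρ x < u := by
  rw [← not_le, pseudoInv_cdf_le_iff hu, not_le]

lemma monotoneOn_pseudoInv_cdf : MonotoneOn (pseudoInv (cdf ρ)) (Ioo 0 1) :=
  fun _ hu _ hv huv =>
    (pseudoInv_cdf_le_iff hu _).2 (huv.trans ((pseudoInv_cdf_le_iff hv _).1 le_rfl))

lemma aemeasurable_pseudoInv_cdf : AEMeasurable (pseudoInv (cdf ρ)) 𝕌 :=
  aemeasurable_restrict_of_monotoneOn measurableSet_Ioo monotoneOn_pseudoInv_cdf

lemma pseudoInv_cdf_preimage_Iic_ae_eq (x : ℝ) :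
    pseudoInv (cdf ρ) ⁻¹' Iic x =ᵐ[𝕌] Ioc 0 (cdf ρ x) := by
  refine Filter.eventuallyEq_set.2 ?_
  filter_upwards [ae_restrict_mem measurableSet_Ioo] with u hu
  simp only [mem_preimage, mem_Iic, mem_Ioc, pseudoInv_cdf_le_iff hu, hu.1, true_and]

lemma pseudoInv_cdf_preimage_Ioi_ae_eq (x : ℝ) :
    pseudoInv (cdf ρ) ⁻¹' Ioi x =ᵐ[𝕌] Ioo (cdf ρ x) 1 := by
  refine Filter.eventuallyEq_set.2 ?_
  filter_upwards [ae_restrict_mem measurableSet_Ioo] with u hu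
  simp only [mem_preimage, mem_Ioi, mem_Ioo, lt_pseudoInv_cdf_iff hu, hu.2, and_true]

lemma pseudoInv_cdf_one_sub_preimage_Ioi_ae_eq (x : ℝ) :
    (fun u => pseudoInv (cdf ρ) (1 - u)) ⁻¹' Ioi x =ᵐ[𝕌] Ioo 0 (1 - cdf ρ x) := by
  refine Filter.eventuallyEq_set.2 ?_
  filter_upwards [ae_restrict_mem measurableSet_Ioo] with u hu
  have hu' : 1 - u ∈ Ioo 0 1 := ⟨by linarith [hu.2], by linarith [hu.1]⟩
  simp only [mem_preimage, mem_Ioi, mem_Ioo, lt_pseudoInv_cdf_iff hu', hu.1, true_and]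
  constructor <;> intro h <;> linarith

lemma map_pseudoInv_cdf [IsProbabilityMeasure ρ] : Measure.map (pseudoInv (cdf ρ)) 𝕌 = ρ := by
  refine Measure.ext_of_Iic _ _ fun x => ?_
  rw [Measure.map_apply_of_aemeasurable aemeasurable_pseudoInv_cdf measurableSet_Iic,
    measure_congr (pseudoInv_cdf_preimage_Iic_ae_eq x),
    uniform_eq_volume_of_subset (Ioc_subset_Icc_self.trans (Icc_subset_Icc le_rfl
      (cdf_le_one ρ x))), Real.volume_Ioc, sub_zero, ofReal_cdf]

lemma measureReal_pseudoInv_cdf_preimage_Ioi_inter (ρ₁ ρ₂ : Measure ℝ) (s t : ℝ) :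
    Measure.real 𝕌 (pseudoInv (cdf ρ₁) ⁻¹' Ioi s ∩ pseudoInv (cdf ρ₂) ⁻¹' Ioi t) =
      min (1 - cdf ρ₁ s) (1 - cdf ρ₂ t) := by
  rw [measureReal_congr ((pseudoInv_cdf_preimage_Ioi_ae_eq s).inter
      (pseudoInv_cdf_preimage_Ioi_ae_eq t)), Ioo_inter_Ioo, min_self,
    uniform_real_Ioo (le_max_of_le_left (cdf_nonneg ρ₁ s)) le_rfl,
    max_eq_left (sub_nonneg.2 (max_le (cdf_le_one ρ₁ s) (cdf_le_one ρ₂ t))), min_sub_sub_left]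

lemma measureReal_pseudoInv_cdf_preimage_Ioi_inter_one_sub (ρ₁ ρ₂ : Measure ℝ) (s t : ℝ) :
    Measure.real 𝕌 (pseudoInv (cdf ρ₁) ⁻¹' Ioi s ∩
        (fun u => pseudoInv (cdf ρ₂) (1 - u)) ⁻¹' Ioi t) =
      max ((1 - cdf ρ₁ s) + (1 - cdf ρ₂ t) - 1) 0 := by
  rw [measureReal_congr ((pseudoInv_cdf_preimage_Ioi_ae_eq s).inter
      (pseudoInv_cdf_one_sub_preimage_Ioi_ae_eq t)), Ioo_inter_Ioo,
    max_eq_left (cdf_nonneg ρ₁ s), min_eq_right (sub_le_self 1 (cdf_nonneg ρ₂ t)),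
    uniform_real_Ioo (cdf_nonneg ρ₁ s) (sub_le_self 1 (cdf_nonneg ρ₂ t))]
  ring_nf

end Quantile

section LawOfRandomVariable

variable {Ω : Type*} [MeasurableSpace Ω] {μ : Measure Ω} [IsProbabilityMeasure μ] {X : Ω → ℝ}

lemma cdf_map (hX : AEMeasurable X μ) (x : ℝ) : cdf (μ.map X) x = μ.real (X ⁻¹' Iic x) := by
  have := Measure.isProbabilityMeasure_map hX
  rw [cdf_eq_real, measureReal_def, measureReal_def,
    Measure.map_apply_of_aemeasurable hX measurableSet_Iic]

lemma measureReal_preimage_Ioi_eq_one_sub_cdf (hX : AEMeasurable X μ) (x : ℝ) :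
    μ.real (X ⁻¹' Ioi x) = 1 - cdf (μ.map X) x := by
  rw [cdf_map hX, ← probReal_compl_eq_one_sub₀ (hX.nullMeasurable measurableSet_Iic),
    ← preimage_compl, compl_Iic]

lemma identDistrib_pseudoInv_cdf_map (hX : AEMeasurable X μ) :
    IdentDistrib (pseudoInv (cdf (μ.map X))) X 𝕌 μ where
  aemeasurable_fst := aemeasurable_pseudoInv_cdf
  aemeasurable_snd := hX
  map_eq := by
    have := Measure.isProbabilityMeasure_map hX
    exact map_pseudoInv_cdf

end LawOfRandomVariable

theorem frechet_hoeffding_general {Ω : Type*} [MeasurableSpace Ω] (μ : Measure Ω)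
    [IsProbabilityMeasure μ] (X₁ X₂ : Ω → ℝ)
    (F₁ F₂ : ℝ → ℝ)
    (hF₁ : ∀ x, F₁ x = (μ (X₁ ⁻¹' Set.Iic x)).toReal)
    (hF₂ : ∀ x, F₂ x = (μ (X₂ ⁻¹' Set.Iic x)).toReal)
    (hm₁ : MemLp X₁ 2 μ) (hm₂ : MemLp X₂ 2 μ)
    (ν : Measure ℝ) (hν : ν = volume.restrict (Set.Icc (0 : ℝ) 1)) :
    corr ν (fun u => pseudoInv F₁ u) (fun u => pseudoInv F₂ (1 - u)) ≤ corr μ X₁ X₂ ∧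
      corr μ X₁ X₂ ≤ corr ν (fun u => pseudoInv F₁ u) (fun u => pseudoInv F₂ u) := by
  have hX₁ := hm₁.aestronglyMeasurable.aemeasurable
  have hX₂ := hm₂.aestronglyMeasurable.aemeasurable
  obtain rfl : F₁ = cdf (μ.map X₁) := funext fun x => (hF₁ x).trans (cdf_map hX₁ x).symm
  obtain rfl : F₂ = cdf (μ.map X₂) := funext fun x => (hF₂ x).trans (cdf_map hX₂ x).symm
  rw [hν, ← Measure.restrict_congr_set Ioo_ae_eq_Icc]
  have h₁ := identDistrib_pseudoInv_cdf_map hX₁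
  have h₂ := identDistrib_pseudoInv_cdf_map hX₂
  have h₂' := (identDistrib_comp_one_sub h₂.aemeasurable_fst).trans h₂
  have hmul {f g : ℝ → ℝ} (hf : IdentDistrib f X₁ 𝕌 μ) (hg : IdentDistrib g X₂ 𝕌 μ) :
      Integrable (fun u => f u * g u) 𝕌 :=
    (hf.memLp_iff.2 hm₁).integrable_mul (hg.memLp_iff.2 hm₂)
  have hX₁X₂ : Integrable (fun ω => X₁ ω * X₂ ω) μ := hm₁.integrable_mul hm₂
  constructor
  · refine corr_le_corr_of_integral_mul_le h₁ h₂' (integral_mul_le_of_measureReal_inter_le h₁ h₂'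
      (hmul h₁ h₂') hX₁X₂ fun s t => ?_)
    rw [measureReal_pseudoInv_cdf_preimage_Ioi_inter_one_sub,
      ← measureReal_preimage_Ioi_eq_one_sub_cdf hX₁, ← measureReal_preimage_Ioi_eq_one_sub_cdf hX₂]
    exact max_add_sub_one_le_measureReal_inter (hX₂.nullMeasurable measurableSet_Ioi)
  · refine corr_le_corr_of_integral_mul_le h₁.symm h₂.symm (integral_mul_le_of_measureReal_inter_le
      h₁.symm h₂.symm hX₁X₂ (hmul h₁ h₂) fun s t => ?_)
    rw [measureReal_pseudoInv_cdf_preimage_Ioi_inter,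
      ← measureReal_preimage_Ioi_eq_one_sub_cdf hX₁, ← measureReal_preimage_Ioi_eq_one_sub_cdf hX₂]
    exact le_min (measureReal_mono inter_subset_left) (measureReal_mono inter_subset_right)

/-- Fréchet–Hoeffding bound: for random variables `X₁, X₂` with cdfs `F₁, F₂`,
finite nonzero variances, and the relevant products integrable (`U` uniform on `[0,1]`),
`Corr(F₁⁻¹(U), F₂⁻¹(1−U)) ≤ Corr(X₁,X₂) ≤ Corr(F₁⁻¹(U), F₂⁻¹(U))`. -/
theorem frechet_hoeffding {Ω : Type*} [MeasurableSpace Ω] (μ : Measure Ω)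
    [IsProbabilityMeasure μ] (X₁ X₂ : Ω → ℝ) (hX₁ : Measurable X₁) (hX₂ : Measurable X₂)
    (F₁ F₂ : ℝ → ℝ)
    (hF₁ : ∀ x, F₁ x = (μ (X₁ ⁻¹' Set.Iic x)).toReal)
    (hF₂ : ∀ x, F₂ x = (μ (X₂ ⁻¹' Set.Iic x)).toReal)
    (hm₁ : MemLp X₁ 2 μ) (hm₂ : MemLp X₂ 2 μ)
    (hv₁ : variance X₁ μ ≠ 0) (hv₂ : variance X₂ μ ≠ 0)
    (ν : Measure ℝ) (hν : ν = volume.restrict (Set.Icc (0 : ℝ) 1))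
    (hint : Integrable (fun ω => X₁ ω * X₂ ω) μ)
    (hint₁ : Integrable (fun u => pseudoInv F₁ u * pseudoInv F₂ u) ν)
    (hint₂ : Integrable (fun u => pseudoInv F₁ u * pseudoInv F₂ (1 - u)) ν) :
    corr ν (fun u => pseudoInv F₁ u) (fun u => pseudoInv F₂ (1 - u)) ≤ corr μ X₁ X₂ ∧
      corr μ X₁ X₂ ≤ corr ν (fun u => pseudoInv F₁ u) (fun u => pseudoInv F₂ u) :=
  frechet_hoeffding_general μ X₁ X₂ F₁ F₂ hF₁ hF₂ hm₁ hm₂ ν hν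
end

section
/- Let p ∈ [1/2, 1). Then ∫₀¹ χ_p(u) χ_p(1−u) du = 0, and consequently the minimum correlation between two Geometric(p) random variables equals ρ₋(p,p) = (0 − ((1−p)/p)²) / ((1−p)/p²) = p − 1. -/
/-
Proof idea: for `u ∈ (0, 1)`, `⌊log x / log (1 - p)⌋ = 0` as soon as `x > 1 - p`. Since
`1 - p ≤ 1/2 ≤ p`, every `u ≠ 1 - p` has `u > 1 - p` or `1 - u > 1 - p`, so one of the two
factors of the antithetic product vanishes almost everywhere and the integral is `0`. The
correlation is then `-m² / σ² = -(1 - p)`.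
-/

open MeasureTheory

lemma Int.floor_div_eq_zero_of_neg {x c : ℝ} (hc : c < 0) (hx : x ≤ 0) (hcx : c < x) :
    ⌊x / c⌋ = 0 :=
  Int.floor_eq_zero_iff.mpr
    ⟨div_nonneg_of_nonpos hx hc.le, (div_lt_one_of_neg hc).mpr hcx⟩

lemma Int.floor_log_div_log_eq_zero {q x : ℝ} (hq₀ : 0 < q) (hq₁ : q < 1) (hqx : q < x)
    (hx₁ : x ≤ 1) : ⌊Real.log x / Real.log q⌋ = 0 :=
  Int.floor_div_eq_zero_of_neg (Real.log_neg hq₀ hq₁)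
    (Real.log_nonpos (hq₀.trans hqx).le hx₁) (Real.log_lt_log hq₀ hqx)

lemma floor_log_mul_floor_log_eq_zero {p u : ℝ} (hp : 1 / 2 ≤ p) (hp₁ : p < 1)
    (hu : u ∈ Set.Ioo (0 : ℝ) 1) (hup : u ≠ 1 - p) :
    (⌊Real.log (1 - u) / Real.log (1 - p)⌋ : ℝ) * (⌊Real.log u / Real.log (1 - p)⌋ : ℝ) = 0 := by
  obtain ⟨hu₀, hu₁⟩ := hu
  rcases hup.lt_or_gt with hlt | hgt
  · rw [Int.floor_log_div_log_eq_zero (by linarith) (by linarith) (by linarith) (by linarith)]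
    simp
  · rw [Int.floor_log_div_log_eq_zero (q := 1 - p) (by linarith) (by linarith) hgt hu₁.le]
    simp

lemma setIntegral_floor_log_mul_floor_log_eq_zero {p : ℝ} (hp : 1 / 2 ≤ p) (hp₁ : p < 1) :
    ∫ u in Set.Ioo (0 : ℝ) 1,
        (⌊Real.log (1 - u) / Real.log (1 - p)⌋ : ℝ) * (⌊Real.log u / Real.log (1 - p)⌋ : ℝ)
      = 0 :=
  setIntegral_eq_zero_of_ae_eq_zero <| by
    filter_upwards [compl_mem_ae_iff.mpr (measure_singleton (1 - p))] with u hup hu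
    exact floor_log_mul_floor_log_eq_zero hp hp₁ hu hup

lemma neg_sq_div_geometric_variance {p : ℝ} (hp₀ : 0 < p) (hp₁ : p < 1) :
    (0 - ((1 - p) / p) ^ 2) / ((1 - p) / p ^ 2) = p - 1 := by
  have : 1 - p ≠ 0 := by linarith
  field_simp
  ring

/-- For `p ∈ [1/2, 1)`, the antithetic product integral
`∫₀¹ χ_p(u) χ_p(1−u) du` vanishes (where `χ_p(u) = ⌊ln(1−u)/ln(1−p)⌋` and
`χ_p(1−u) = ⌊ln u / ln(1−p)⌋`), and hence the minimum correlation between two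
Geometric(p) random variables is `ρ₋(p,p) = (0 − ((1−p)/p)²)/((1−p)/p²) = p − 1`. -/
theorem min_correlation_geometric_half_le (p : ℝ) (hp : p ∈ Set.Ico (1 / 2 : ℝ) 1) :
    (∫ u in Set.Ioo (0 : ℝ) 1,
        (⌊Real.log (1 - u) / Real.log (1 - p)⌋ : ℝ) * (⌊Real.log u / Real.log (1 - p)⌋ : ℝ))
      = 0 ∧
    ((∫ u in Set.Ioo (0 : ℝ) 1,
        (⌊Real.log (1 - u) / Real.log (1 - p)⌋ : ℝ) * (⌊Real.log u / Real.log (1 - p)⌋ : ℝ))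
        - ((1 - p) / p) ^ 2) / ((1 - p) / p ^ 2) = p - 1 := by
  obtain ⟨hp_half, hp₁⟩ := hp
  have hzero := setIntegral_floor_log_mul_floor_log_eq_zero hp_half hp₁
  refine ⟨hzero, ?_⟩
  rw [hzero]
  exact neg_sq_div_geometric_variance (by linarith) hp₁
end

section
/- For p = 1/4: ∫₀¹ χ_{1/4}(u) χ_{1/4}(1−u) du = 221/128, and consequently the minimum correlation between two Geometric(1/4) random variables equals ρ₋(1/4,1/4) = (221/128 − 9)/12 = −931/1536. -/
/-!
`geomQuantile p` is the paper's `χ_p`. Writing `q = 1 - p`, `χ_p(u) = k` exactly when `q ^ (k + 1) < 1 - u ≤ q ^ k`, so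
`u ↦ χ_p(u) χ_p(1 - u)` is a step function. It vanishes off `[p, 1 - p]`, and for `p = 1/4` its
jumps inside `(1/4, 3/4)` are at the points `q ^ j` and `1 - q ^ j` (`j ≤ 4`), which cut the
interval into seven pieces on which the integrand takes the values `4, 3, 2, 4, 2, 3, 4`.
-/

open MeasureTheory Set Finset

noncomputable def geomQuantile (p u : ℝ) : ℤ :=
  ⌊Real.log (1 - u) / Real.log (1 - p)⌋

section geomQuantile

variable {p u : ℝ}

theorem geomQuantile_eq (hp0 : 0 < p) (hp1 : p < 1) {k : ℕ}
    (hlo : (1 - p) ^ (k + 1) < 1 - u) (hhi : 1 - u ≤ (1 - p) ^ k) :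
    geomQuantile p u = k := by
  have hlog : Real.log (1 - p) < 0 := Real.log_neg (by linarith) (by linarith)
  have hpos : 0 < 1 - u := lt_of_le_of_lt (by positivity) hlo
  rw [geomQuantile, Int.floor_eq_iff, le_div_iff_of_neg hlog, div_lt_iff_of_neg hlog]
  constructor
  · simpa only [Real.log_pow, Int.cast_natCast] using Real.log_le_log hpos hhi
  · have := Real.log_lt_log (by positivity) hlo
    push_cast [Real.log_pow] at this ⊢
    linarith

theorem geomQuantile_eq_of_mem_Ioo (hp0 : 0 < p) (hp1 : p < 1) {s t : ℝ} {k : ℕ}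
    (hs : 1 - s ≤ (1 - p) ^ k) (ht : (1 - p) ^ (k + 1) ≤ 1 - t) (hu : u ∈ Ioo s t) :
    geomQuantile p u = k :=
  geomQuantile_eq hp0 hp1 (by linarith [hu.2]) (by linarith [hu.1])

theorem geomQuantile_eq_zero (hp0 : 0 < p) (hp1 : p < 1) (hu0 : 0 ≤ u) (hup : u < p) :
    geomQuantile p u = 0 := by
  simpa using geomQuantile_eq (k := 0) hp0 hp1 (by rw [zero_add, pow_one]; linarith)
    (by rw [pow_zero]; linarith)

theorem setIntegral_geomQuantile_mul_one_sub_Ioo_zero_one (hp0 : 0 < p) (hp1 : p < 1) :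
    ∫ u in Ioo 0 1, (geomQuantile p u : ℝ) * geomQuantile p (1 - u) =
      ∫ u in Ioo p (1 - p), (geomQuantile p u : ℝ) * geomQuantile p (1 - u) := by
  rw [← integral_Icc_eq_integral_Ioo (x := p)]
  refine setIntegral_eq_of_subset_of_forall_sdiff_eq_zero measurableSet_Ioo
    (Icc_subset_Ioo (by linarith) (by linarith)) ?_
  rintro u ⟨⟨hu0, hu1⟩, hu⟩
  rcases not_and_or.1 hu with hup | hup
  · rw [geomQuantile_eq_zero hp0 hp1 hu0.le (not_le.1 hup)]
    simp
  · rw [geomQuantile_eq_zero (u := 1 - u) hp0 hp1 (by linarith) (by linarith)]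
    simp

end geomQuantile

theorem intervalIntegral_eq_sum_of_eqOn_Ioo {f : ℝ → ℝ} {x c : ℕ → ℝ} {n : ℕ}
    (hx : ∀ k < n, x k ≤ x (k + 1))
    (hf : ∀ k < n, EqOn f (fun _ ↦ c k) (Ioo (x k) (x (k + 1)))) :
    ∫ u in x 0..x n, f u = ∑ k ∈ range n, c k * (x (k + 1) - x k) := by
  have hint : ∀ k < n, IntervalIntegrable f volume (x k) (x (k + 1)) := fun k hk ↦
    (intervalIntegrable_iff_integrableOn_Ioo_of_le (hx k hk)).2 <|
      (integrableOn_const measure_Ioo_lt_top.ne).congr_fun (hf k hk).symm measurableSet_Ioo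
  rw [← intervalIntegral.sum_integral_adjacent_intervals hint]
  refine Finset.sum_congr rfl fun k hk ↦ ?_
  rw [intervalIntegral.integral_congr_Ioo_of_le (hx k (mem_range.1 hk)) (hf k (mem_range.1 hk)),
    intervalIntegral.integral_const, smul_eq_mul, mul_comm]

theorem setIntegral_geomQuantile_quarter_mul_one_sub :
    ∫ u in Ioo 0 1, (geomQuantile (1/4) u : ℝ) * geomQuantile (1/4) (1 - u) = 221 / 128 := by
  set x : ℕ → ℝ := fun k ↦ [1/4, 81/256, 27/64, 7/16, 9/16, 37/64, 175/256, 3/4].getD k 0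
  -- on the `k`-th piece, `geomQuantile (1/4) u = a k` and `geomQuantile (1/4) (1 - u) = b k`
  set a : ℕ → ℕ := fun k ↦ [1, 1, 1, 2, 2, 3, 4].getD k 0
  set b : ℕ → ℕ := fun k ↦ [4, 3, 2, 2, 1, 1, 1].getD k 0
  have hx : ∀ k < 7, x k ≤ x (k + 1) := by
    intro k hk
    interval_cases k <;> norm_num [x]
  have hf : ∀ k < 7, EqOn (fun u ↦ (geomQuantile (1/4) u : ℝ) * geomQuantile (1/4) (1 - u))
      (fun _ ↦ (a k * b k : ℝ)) (Ioo (x k) (x (k + 1))) := by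
    intro k hk u hu
    have hu' : 1 - u ∈ Ioo (1 - x (k + 1)) (1 - x k) := ⟨by linarith [hu.2], by linarith [hu.1]⟩
    dsimp only
    rw [geomQuantile_eq_of_mem_Ioo (k := a k) (by norm_num) (by norm_num) ?_ ?_ hu,
      geomQuantile_eq_of_mem_Ioo (k := b k) (by norm_num) (by norm_num) ?_ ?_ hu'] <;>
    · push_cast; interval_cases k <;> norm_num [x, a, b]
  have h := intervalIntegral_eq_sum_of_eqOn_Ioo hx hf
  norm_num [x, a, b, Finset.sum_range_succ] at h
  rw [setIntegral_geomQuantile_mul_one_sub_Ioo_zero_one (by norm_num) (by norm_num),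
    ← integral_Ioc_eq_integral_Ioo, ← intervalIntegral.integral_of_le (by norm_num)]
  norm_num [h]

/-- For `p = 1/4`: the antithetic product integral
`∫₀¹ χ_{1/4}(u) χ_{1/4}(1−u) du` equals `221/128`, and consequently the minimum
correlation between two Geometric(1/4) random variables equals
`ρ₋(1/4,1/4) = (221/128 − 9)/12 = −931/1536`. -/
theorem min_correlation_geometric_quarter :
    (∫ u in Set.Ioo (0 : ℝ) 1,
        (⌊Real.log (1 - u) / Real.log (1 - (1/4 : ℝ))⌋ : ℝ) *
          (⌊Real.log u / Real.log (1 - (1/4 : ℝ))⌋ : ℝ)) = 221 / 128 ∧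
    ((∫ u in Set.Ioo (0 : ℝ) 1,
        (⌊Real.log (1 - u) / Real.log (1 - (1/4 : ℝ))⌋ : ℝ) *
          (⌊Real.log u / Real.log (1 - (1/4 : ℝ))⌋ : ℝ)) - 9) / 12
      = -931 / 1536 := by
  have key := setIntegral_geomQuantile_quarter_mul_one_sub
  simp only [geomQuantile, sub_sub_cancel] at key
  exact ⟨key, by rw [key]; norm_num⟩
end

section
/- The integral ∫₀¹ ln(1−u) ln(u) du converges and equals 2 − π²/6. -/
/-!
On `(0, 1)` the series `-log (1 - u) = ∑ uⁿ⁺¹ / (n + 1)` turns the integrand into a series of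
nonnegative functions `uⁿ⁺¹ / (n + 1) · (-log u)`, so by monotone convergence the integrand is
integrable and may be integrated termwise. Since `∫₀¹ uⁿ⁺¹ log u du = -1 / (n + 2)²`, the result is
`∑ 1 / ((n + 1)(n + 2)²) = ∑ (1 / (n + 1) - 1 / (n + 2)) - ∑ 1 / (n + 2)² = 1 - (π² / 6 - 1)`.
-/

open MeasureTheory Real Set Filter Topology

section

variable {α : Type*} [MeasurableSpace α] {μ : Measure α}

theorem integrable_and_hasSum_integral_of_nonneg {F : ℕ → α → ℝ} {f : α → ℝ}
    (hF_nonneg : ∀ n, 0 ≤ᵐ[μ] F n) (hF_int : ∀ n, Integrable (F n) μ)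
    (hF_sum : Summable fun n ↦ ∫ a, F n a ∂μ) (hf : ∀ᵐ a ∂μ, HasSum (F · a) (f a)) :
    Integrable f μ ∧ HasSum (fun n ↦ ∫ a, F n a ∂μ) (∫ a, f a ∂μ) := by
  have hF_nonneg' : ∀ᵐ a ∂μ, ∀ n, 0 ≤ F n a := ae_all_iff.2 hF_nonneg
  have hf_nonneg : 0 ≤ᵐ[μ] f := by
    filter_upwards [hf, hF_nonneg'] with a ha ha' using ha.nonneg ha'
  have hf_meas : AEStronglyMeasurable f μ :=
    aestronglyMeasurable_of_tendsto_ae atTop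
      (fun n ↦ Finset.aestronglyMeasurable_fun_sum _ fun i _ ↦ (hF_int i).1)
      (hf.mono fun a ha ↦ ha.tendsto_sum_nat)
  have hlintegral : ∫⁻ a, ENNReal.ofReal (f a) ∂μ = ENNReal.ofReal (∑' n, ∫ a, F n a ∂μ) :=
    calc ∫⁻ a, ENNReal.ofReal (f a) ∂μ = ∫⁻ a, ∑' n, ENNReal.ofReal (F n a) ∂μ := by
          refine lintegral_congr_ae ?_
          filter_upwards [hf, hF_nonneg'] with a ha ha'
          rw [← ha.tsum_eq, ENNReal.ofReal_tsum_of_nonneg ha' ha.summable]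
      _ = ∑' n, ENNReal.ofReal (∫ a, F n a ∂μ) := by
          rw [lintegral_tsum fun n ↦ (hF_int n).1.aemeasurable.ennreal_ofReal]
          exact tsum_congr fun n ↦
            (ofReal_integral_eq_lintegral_ofReal (hF_int n) (hF_nonneg n)).symm
      _ = ENNReal.ofReal (∑' n, ∫ a, F n a ∂μ) :=
          (ENNReal.ofReal_tsum_of_nonneg (fun n ↦ integral_nonneg_of_ae (hF_nonneg n)) hF_sum).symm
  have hf_int : Integrable f μ :=
    ⟨hf_meas, (hasFiniteIntegral_iff_ofReal hf_nonneg).2 (hlintegral ▸ ENNReal.ofReal_lt_top)⟩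
  have hF_norm : ∀ n, ∫ a, ‖F n a‖ ∂μ = ∫ a, F n a ∂μ := fun n ↦
    integral_congr_ae <| (hF_nonneg n).mono fun a ha ↦ Real.norm_of_nonneg ha
  refine ⟨hf_int, ?_⟩
  rw [integral_congr_ae (hf.mono fun a ha ↦ ha.tsum_eq.symm)]
  exact hasSum_integral_of_summable_integral_norm hF_int (by simpa only [hF_norm] using hF_sum)

end

theorem hasSum_sub_succ_of_antitone {f : ℕ → ℝ} {l : ℝ} (hf : Antitone f)
    (hl : Tendsto f atTop (𝓝 l)) : HasSum (fun n ↦ f n - f (n + 1)) (f 0 - l) := by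
  rw [hasSum_iff_tendsto_nat_of_nonneg fun n ↦ sub_nonneg.2 (hf n.le_succ)]
  simpa only [Finset.sum_range_sub'] using tendsto_const_nhds.sub hl

theorem hasSum_one_div_succ_mul_add_two_sq :
    HasSum (fun n : ℕ ↦ 1 / (((n : ℝ) + 1) * ((n : ℝ) + 2) ^ 2)) (2 - π ^ 2 / 6) := by
  have htelescope : HasSum (fun n : ℕ ↦ 1 / ((n : ℝ) + 1) - 1 / ((n : ℝ) + 1 + 1)) 1 := by
    simpa using hasSum_sub_succ_of_antitone (f := fun n : ℕ ↦ 1 / ((n : ℝ) + 1))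
      (fun m n h ↦ by dsimp only; gcongr) tendsto_one_div_add_atTop_nhds_zero_nat
  have hzeta : HasSum (fun n : ℕ ↦ 1 / ((n : ℝ) + 2) ^ 2) (π ^ 2 / 6 - 1) := by
    simpa [Finset.sum_range_succ] using (hasSum_nat_add_iff' 2).2 hasSum_zeta_two
  rw [show 2 - π ^ 2 / 6 = 1 - (π ^ 2 / 6 - 1) by ring]
  refine (htelescope.sub hzeta).congr_fun fun n ↦ ?_
  field_simp
  ring

theorem intervalIntegrable_pow_mul_log (n : ℕ) {a b : ℝ} :
    IntervalIntegrable (fun x ↦ x ^ n * log x) volume a b :=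
  intervalIntegral.intervalIntegrable_log'.continuousOn_mul (continuous_pow n).continuousOn

theorem integral_pow_mul_log (n : ℕ) :
    ∫ x in (0 : ℝ)..1, x ^ n * log x = -1 / ((n : ℝ) + 1) ^ 2 := by
  set F : ℝ → ℝ := fun x ↦ x ^ (n + 1) * log x / (n + 1) - x ^ (n + 1) / (n + 1) ^ 2
  have hderiv : ∀ x ∈ Ioo (0 : ℝ) 1, HasDerivAt F (x ^ n * log x) x := by
    intro x hx
    have hx0 : x ≠ 0 := hx.1.ne'
    refine ((((hasDerivAt_pow (n + 1) x).mul (hasDerivAt_log hx0)).div_const _).sub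
      ((hasDerivAt_pow (n + 1) x).div_const _)).congr_deriv ?_
    field_simp
    push_cast
    ring
  -- `F` is continuous at `0` because `x * log x` is.
  have hcont : Continuous F := by
    have hF : F = fun x ↦ x ^ n * (x * log x) / (n + 1) - x ^ (n + 1) / (n + 1) ^ 2 := by
      ext x
      simp only [F]
      ring
    have := continuous_mul_log
    rw [hF]
    fun_prop
  rw [intervalIntegral.integral_eq_sub_of_hasDerivAt_of_le zero_le_one hcont.continuousOn hderiv
    (intervalIntegrable_pow_mul_log n)]
  simp only [F, one_pow, log_one, log_zero, mul_zero, zero_div, zero_pow n.succ_ne_zero, sub_self,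
    sub_zero]
  ring

theorem integrableOn_pow_succ_div_mul_neg_log (n : ℕ) :
    IntegrableOn (fun u : ℝ ↦ u ^ (n + 1) / (n + 1) * -log u) (Ioo 0 1) := by
  have h : IntegrableOn (fun u : ℝ ↦ u ^ (n + 1) * log u) (Ioo 0 1) :=
    (intervalIntegrable_pow_mul_log (n + 1) (a := 0) (b := 1)).1.mono_set Ioo_subset_Ioc_self
  refine IntegrableOn.congr_fun (h.const_mul (-1 / ((n : ℝ) + 1))) (fun u _ ↦ ?_)
    measurableSet_Ioo
  ring

theorem setIntegral_pow_succ_div_mul_neg_log (n : ℕ) :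
    ∫ u in Ioo (0 : ℝ) 1, u ^ (n + 1) / (n + 1) * -log u =
      1 / (((n : ℝ) + 1) * ((n : ℝ) + 2) ^ 2) := by
  have h : ∫ u in Ioo (0 : ℝ) 1, u ^ (n + 1) * log u = -1 / ((n : ℝ) + 2) ^ 2 := by
    rw [← integral_Ioc_eq_integral_Ioo, ← intervalIntegral.integral_of_le zero_le_one,
      integral_pow_mul_log]
    push_cast
    ring
  calc ∫ u in Ioo (0 : ℝ) 1, u ^ (n + 1) / (n + 1) * -log u
      = -1 / ((n : ℝ) + 1) * ∫ u in Ioo (0 : ℝ) 1, u ^ (n + 1) * log u := by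
        rw [← integral_const_mul]
        congr 1 with u
        ring
    _ = 1 / (((n : ℝ) + 1) * ((n : ℝ) + 2) ^ 2) := by
        rw [h]
        field_simp

theorem hasSum_log_one_sub_mul_log {u : ℝ} (hu : |u| < 1) :
    HasSum (fun n : ℕ ↦ u ^ (n + 1) / (n + 1) * -log u) (log (1 - u) * log u) := by
  have h := (hasSum_pow_div_log_of_abs_lt_one hu).mul_right (-log u)
  rwa [neg_mul_neg] at h

/-- The integral `∫₀¹ ln(1−u) ln u du` converges and equals `2 − π²/6`. -/
theorem integral_log_one_sub_mul_log :
    IntegrableOn (fun u : ℝ => Real.log (1 - u) * Real.log u) (Set.Ioo (0 : ℝ) 1) ∧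
      ∫ u in Set.Ioo (0 : ℝ) 1, Real.log (1 - u) * Real.log u = 2 - Real.pi ^ 2 / 6 := by
  have hF_nonneg : ∀ n : ℕ, 0 ≤ᵐ[volume.restrict (Ioo (0 : ℝ) 1)]
      fun u ↦ u ^ (n + 1) / (n + 1) * -log u := fun n ↦
    ae_restrict_of_forall_mem measurableSet_Ioo fun u hu ↦
      mul_nonneg (div_nonneg (pow_nonneg hu.1.le _) n.cast_add_one_pos.le)
        (neg_nonneg.2 (log_nonpos hu.1.le hu.2.le))
  have hF_integral := setIntegral_pow_succ_div_mul_neg_log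
  obtain ⟨hint, hsum⟩ := integrable_and_hasSum_integral_of_nonneg hF_nonneg
    integrableOn_pow_succ_div_mul_neg_log
    (by simpa only [hF_integral] using hasSum_one_div_succ_mul_add_two_sq.summable)
    (ae_restrict_of_forall_mem measurableSet_Ioo fun u hu ↦
      hasSum_log_one_sub_mul_log (abs_lt.2 ⟨by linarith [hu.1], hu.2⟩))
  refine ⟨hint, hsum.unique ?_⟩
  simpa only [hF_integral] using hasSum_one_div_succ_mul_add_two_sq
end

section
/- For every p ∈ (0, 1/2], the following two-sided bound holds: 1 − (2 − 1/ln 2)·p ≤ −p/ln(1−p) ≤ 1 − (1/2)p − (1/12)p². -/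
/-!
Writing `L(x) = -log (1 - x)`, both bounds say that `L` is squeezed between two rational
functions, `x / (1 - x/2 - x²/12) ≤ L(x) ≤ x / (1 - c x)` with `c = 2 - 1/log 2`, and each
comparison `x / r(x) + log (1 - x)` vanishes at `0`. For the quadratic denominator its derivative
has the sign of `-(x³/6 + x⁴/144)`, so it stays `≤ 0`. For the linear one the derivative has the
sign of `x (2c - 1 - c² x)`: the difference first increases and then decreases, so it is `≥ 0`
between its two zeros `0` and `1/2`; the constant `c` is exactly the one making `1/2` a zero.
-/

open Real Set

lemma min_le_of_monotoneOn_of_antitoneOn {α β : Type*} [LinearOrder α] [LinearOrder β]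
    {f : α → β} {a m b x : α}
    (hmono : MonotoneOn f (Icc a m)) (hanti : AntitoneOn f (Icc m b)) (hx : x ∈ Icc a b) :
    min (f a) (f b) ≤ f x := by
  rcases le_total x m with hxm | hmx
  · exact (min_le_left _ _).trans (hmono ⟨le_rfl, hx.1.trans hxm⟩ ⟨hx.1, hxm⟩ hx.1)
  · exact (min_le_right _ _).trans (hanti ⟨hmx, hx.2⟩ ⟨hmx.trans hx.2, le_rfl⟩ hx.2)

section DerivSign

variable {D : Set ℝ} {f f' : ℝ → ℝ}

lemma monotoneOn_of_hasDerivAt_nonneg (hD : Convex ℝ D) (hf : ∀ x ∈ D, HasDerivAt f (f' x) x)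
    (hf' : ∀ x ∈ interior D, 0 ≤ f' x) : MonotoneOn f D :=
  monotoneOn_of_hasDerivWithinAt_nonneg hD
    (fun x hx ↦ (hf x hx).continuousAt.continuousWithinAt)
    (fun x hx ↦ (hf x (interior_subset hx)).hasDerivWithinAt) hf'

lemma antitoneOn_of_hasDerivAt_nonpos (hD : Convex ℝ D) (hf : ∀ x ∈ D, HasDerivAt f (f' x) x)
    (hf' : ∀ x ∈ interior D, f' x ≤ 0) : AntitoneOn f D :=
  antitoneOn_of_hasDerivWithinAt_nonpos hD
    (fun x hx ↦ (hf x hx).continuousAt.continuousWithinAt)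
    (fun x hx ↦ (hf x (interior_subset hx)).hasDerivWithinAt) hf'

end DerivSign

lemma hasDerivAt_div_add_log_one_sub {r : ℝ → ℝ} {r' x : ℝ} (hr : HasDerivAt r r' x)
    (hrx : r x ≠ 0) (hx : x ≠ 1) :
    HasDerivAt (fun y ↦ y / r y + log (1 - y)) ((r x - x * r') / r x ^ 2 - 1 / (1 - x)) x := by
  have hlog : HasDerivAt (fun y ↦ log (1 - y)) (-1 / (1 - x)) x := by
    simpa using ((hasDerivAt_id x).const_sub 1).log (sub_ne_zero.2 hx.symm)
  have hdiv : HasDerivAt (fun y ↦ y / r y) ((1 * r x - x * r') / r x ^ 2) x :=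
    (hasDerivAt_id' x).div hr hrx
  exact (hdiv.add hlog).congr_deriv (by ring)

lemma div_le_neg_log_one_sub {x : ℝ} (hx₀ : 0 ≤ x) (hx₁ : x < 1) :
    x / (1 - x / 2 - x ^ 2 / 12) ≤ -log (1 - x) := by
  set f : ℝ → ℝ := fun y ↦ y / (1 - y / 2 - y ^ 2 / 12) + log (1 - y)
  have hderiv : ∀ y ∈ Ico (0 : ℝ) 1,
      HasDerivAt f ((1 + y ^ 2 / 12) / (1 - y / 2 - y ^ 2 / 12) ^ 2 - 1 / (1 - y)) y := by
    intro y ⟨hy₀, hy₁⟩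
    have hr : HasDerivAt (fun y : ℝ ↦ 1 - y / 2 - y ^ 2 / 12) (-(1 / 2) - y / 6) y := by
      refine ((((hasDerivAt_id' y).div_const 2).const_sub 1).sub
        ((hasDerivAt_pow 2 y).div_const 12)).congr_deriv ?_
      ring
    convert hasDerivAt_div_add_log_one_sub hr (by nlinarith) hy₁.ne using 2
    ring
  have hanti : AntitoneOn f (Ico 0 1) := by
    refine antitoneOn_of_hasDerivAt_nonpos (convex_Ico 0 1) hderiv fun y hy ↦ ?_
    rw [interior_Ico] at hy
    obtain ⟨hy₀, hy₁⟩ := hy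
    have hr : 0 < 1 - y / 2 - y ^ 2 / 12 := by nlinarith
    -- `(1 - y/2 - y²/12)² - (1 + y²/12)(1 - y) = y³/6 + y⁴/144`
    have key : (1 + y ^ 2 / 12) * (1 - y) ≤ 1 * (1 - y / 2 - y ^ 2 / 12) ^ 2 := by
      nlinarith [pow_pos hy₀ 3, pow_pos hy₀ 4]
    exact sub_nonpos.2 ((div_le_div_iff₀ (by positivity) (by linarith)).2 key)
  have hfx : f x ≤ f 0 := hanti ⟨le_rfl, zero_lt_one⟩ ⟨hx₀, hx₁⟩ hx₀
  simp only [f, zero_div, sub_zero, log_one, add_zero] at hfx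
  linarith

lemma neg_log_one_sub_le_div {c b x : ℝ} (hc : 1 / 2 ≤ c) (hb : b < 1) (hcb : c * b < 1)
    (hpeak : 2 * c - 1 ≤ c ^ 2 * b) (hend : -log (1 - b) ≤ b / (1 - c * b))
    (hx : x ∈ Icc 0 b) : -log (1 - x) ≤ x / (1 - c * x) := by
  set f : ℝ → ℝ := fun y ↦ y / (1 - c * y) + log (1 - y)
  have hc₀ : 0 < c := by linarith
  have hden : ∀ y ∈ Icc 0 b, 0 < 1 - c * y := fun y hy ↦ by nlinarith [hy.2]
  have hderiv : ∀ y ∈ Icc 0 b, HasDerivAt f (1 / (1 - c * y) ^ 2 - 1 / (1 - y)) y := by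
    intro y hy
    have hr : HasDerivAt (fun y : ℝ ↦ 1 - c * y) (-c) y := by
      simpa using ((hasDerivAt_id y).const_mul c).const_sub 1
    convert hasDerivAt_div_add_log_one_sub hr (hden y hy).ne' (by linarith [hy.2]) using 2
    ring
  -- `m` is the positive root of `(1 - c y)² = 1 - y`, where the derivative changes sign
  set m := (2 * c - 1) / c ^ 2
  have hm₀ : 0 ≤ m := div_nonneg (by linarith) (by positivity)
  have hmb : m ≤ b := (div_le_iff₀ (by positivity)).2 (by linarith)
  have hmono : MonotoneOn f (Icc 0 m) := by
    refine monotoneOn_of_hasDerivAt_nonneg (convex_Icc 0 m)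
      (fun y hy ↦ hderiv y ⟨hy.1, hy.2.trans hmb⟩) fun y hy ↦ ?_
    rw [interior_Icc] at hy
    have hcy : c ^ 2 * y ≤ 2 * c - 1 := by
      rw [← le_div_iff₀' (by positivity)]; exact hy.2.le
    have hden' := hden y ⟨hy.1.le, hy.2.le.trans hmb⟩
    have key : 1 * (1 - c * y) ^ 2 ≤ 1 * (1 - y) := by nlinarith [hy.1]
    exact sub_nonneg.2 ((div_le_div_iff₀ (by linarith [hmb, hy.2]) (by positivity)).2 key)
  have hanti : AntitoneOn f (Icc m b) := by
    refine antitoneOn_of_hasDerivAt_nonpos (convex_Icc m b)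
      (fun y hy ↦ hderiv y ⟨hm₀.trans hy.1, hy.2⟩) fun y hy ↦ ?_
    rw [interior_Icc] at hy
    have hcy : 2 * c - 1 ≤ c ^ 2 * y := by
      rw [← div_le_iff₀' (by positivity)]; exact hy.1.le
    have hden' := hden y ⟨hm₀.trans hy.1.le, hy.2.le⟩
    have key : 1 * (1 - y) ≤ 1 * (1 - c * y) ^ 2 := by nlinarith [hm₀.trans_lt hy.1]
    exact sub_nonpos.2 ((div_le_div_iff₀ (by positivity) (by linarith [hy.2])).2 key)
  have hf₀ : f 0 = 0 := by simp [f]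
  have hfb : 0 ≤ f b := by simp only [f]; linarith
  have hfx : 0 ≤ f x :=
    (le_min hf₀.ge hfb).trans (min_le_of_monotoneOn_of_antitoneOn hmono hanti hx)
  simp only [f] at hfx
  linarith

/-- For `p ∈ (0, 1/2]`:
`1 − (2 − 1/ln 2)·p ≤ −p/ln(1−p) ≤ 1 − p/2 − p²/12`. -/
theorem neg_p_div_log_bounds (p : ℝ) (hp : p ∈ Set.Ioc (0 : ℝ) (1 / 2)) :
    1 - (2 - (Real.log 2)⁻¹) * p ≤ -p / Real.log (1 - p) ∧
      -p / Real.log (1 - p) ≤ 1 - (1 / 2) * p - (1 / 12) * p ^ 2 := by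
  obtain ⟨hp₀, hp₁⟩ := hp
  have hL : 0 < -log (1 - p) := neg_pos.2 (log_neg (by linarith) (by linarith))
  rw [← neg_div_neg_eq, neg_neg]
  set c := 2 - (log 2)⁻¹
  have hc : 0.55 < c ∧ c < 0.56 := by
    have h₁ : (log 2)⁻¹ < 1.45 := (inv_lt_comm₀ (by positivity) (by norm_num)).2
      (by linarith [log_two_gt_d9])
    have h₂ : 1.44 < (log 2)⁻¹ := (lt_inv_comm₀ (by norm_num) (by positivity)).2
      (by linarith [log_two_lt_d9])
    constructor <;> linarith
  have hend : -log (1 - 1 / 2) ≤ 1 / 2 / (1 - c * (1 / 2)) := by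
    rw [show (1 : ℝ) - 1 / 2 = 2⁻¹ by norm_num, log_inv, neg_neg,
      show 1 - c * (1 / 2) = (log 2)⁻¹ / 2 by ring, div_div_div_cancel_right₀ two_ne_zero,
      one_div, inv_inv]
  constructor
  · have hlower := neg_log_one_sub_le_div (by linarith) (by norm_num) (by linarith)
      (by nlinarith) hend ⟨hp₀.le, hp₁⟩
    exact (le_div_comm₀ hL (by nlinarith)).1 hlower
  · have hupper := div_le_neg_log_one_sub hp₀.le (by linarith)
    rw [div_le_comm₀ (by nlinarith) hL] at hupper
    linarith
end

section
/- Let λ > 0 and p = 1 − e^{−λ}. Let X be Geometric(p) and let A be an independent random variable with density λe^{−λa}/(1 − e^{−λ}) on [0,1] (an exponential of rate λ conditioned to lie in [0,1]). Then X + A is exponentially distributed with rate λ. -/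
/-!
Given `X = n`, the variable `X + A` has the truncated density moved to `[n, n + 1)`, and the
geometric weight turns it into exactly the exponential density there:
`p (1 - p)^n · λ e^{-λ (x - n)} / p = λ e^{-λ x}` because `(1 - p)^n = e^{-λ n}`. Summing over
`n`, the intervals `[n, n + 1)` tile `[0, ∞)`.
-/

open MeasureTheory ProbabilityTheory Set
open scoped ENNReal

namespace MeasureTheory.Measure

theorem map_add_left_withDensity {G : Type*} [MeasurableSpace G] [AddGroup G] [MeasurableAdd G]
    (μ : Measure G) [μ.IsAddLeftInvariant] (f : G → ℝ≥0∞) (c : G) :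
    (μ.withDensity f).map (c + ·) = μ.withDensity (fun x => f (-c + x)) := by
  ext s hs
  rw [map_apply (measurable_const_add c) hs,
    withDensity_apply _ (hs.preimage (measurable_const_add c)), withDensity_apply _ hs]
  simpa using (measurePreserving_add_left μ c).setLIntegral_comp_preimage_emb
    (measurableEmbedding_addLeft c) (fun x => f (-c + x)) s

theorem sum_conv {M ι : Type*} [AddMonoid M] [MeasurableSpace M] [MeasurableAdd₂ M]
    (m : ι → Measure M) (ν : Measure M) [SFinite ν] :
    Measure.sum m ∗ ν = Measure.sum (fun i => m i ∗ ν) := by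
  rw [conv, prod_sum_left, map_sum (by fun_prop)]
  rfl

theorem sum_smul_dirac_conv_withDensity {G ι : Type*} [MeasurableSpace G] [AddGroup G]
    [MeasurableAdd₂ G] [Countable ι] (μ : Measure G) [SFinite μ] [μ.IsAddLeftInvariant]
    (w : ι → ℝ≥0∞) (c : ι → G) {f : G → ℝ≥0∞} (hf : Measurable f) :
    Measure.sum (fun i => w i • dirac (c i)) ∗ μ.withDensity f
      = μ.withDensity (fun x => ∑' i, w i * f (-c i + x)) := by
  have hsummand (i : ι) : (w i • dirac (c i)) ∗ μ.withDensity f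
      = μ.withDensity (fun x => w i * f (-c i + x)) := by
    rw [conv_smul_left, dirac_conv, map_add_left_withDensity,
      ← withDensity_smul _ (by fun_prop)]
    rfl
  rw [sum_conv, funext hsummand, ← withDensity_tsum fun i => by fun_prop]
  congr 1
  funext x
  exact tsum_apply (Pi.summable.2 fun _ => ENNReal.summable)

end MeasureTheory.Measure

theorem tsum_indicator_Ico_natCast {M : Type*} [AddCommMonoid M] [TopologicalSpace M]
    (F : ℕ → ℝ → M) (x : ℝ) :
    ∑' n : ℕ, (Ico (n : ℝ) (n + 1)).indicator (F n) x
      = (Ici 0).indicator (fun y => F ⌊y⌋₊ y) x := by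
  rcases lt_or_ge x 0 with hx | hx
  · have hnot (n : ℕ) : x ∉ Ico (n : ℝ) (n + 1) := fun h => by
      linarith [h.1, (n.cast_nonneg : (0 : ℝ) ≤ n)]
    simp [indicator_of_notMem (hnot _), indicator_of_notMem (notMem_Ici.2 hx)]
  · have hmem (n : ℕ) : x ∈ Ico (n : ℝ) (n + 1) ↔ ⌊x⌋₊ = n := by
      rw [Nat.floor_eq_iff hx, mem_Ico]
    rw [tsum_eq_single ⌊x⌋₊
        fun n hn => indicator_of_notMem (fun h => hn ((hmem n).1 h).symm) _,
      indicator_of_mem ((hmem _).2 rfl), indicator_of_mem (mem_Ici.2 hx)]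

theorem geometric_mul_shifted_density {l : ℝ} (hl : 0 < l) (n : ℕ) (x : ℝ) :
    (1 - Real.exp (-l)) * (1 - (1 - Real.exp (-l))) ^ n
      * (l * Real.exp (-l * (x - n)) / (1 - Real.exp (-l))) = l * Real.exp (-l * x) := by
  have hne : 1 - Real.exp (-l) ≠ 0 := by
    have : Real.exp (-l) < 1 := Real.exp_lt_one_iff.2 (neg_lt_zero.2 hl)
    linarith
  rw [sub_sub_cancel, ← Real.exp_nat_mul]
  field_simp
  rw [← Real.exp_add]
  ring_nf

theorem ofReal_geometric_mul_shifted_indicator {l : ℝ} (hl : 0 < l) (n : ℕ) (x : ℝ) :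
    ENNReal.ofReal ((1 - Real.exp (-l)) * (1 - (1 - Real.exp (-l))) ^ n)
      * ENNReal.ofReal ((Ico (0 : ℝ) 1).indicator
          (fun a => l * Real.exp (-l * a) / (1 - Real.exp (-l))) (x - n))
      = (Ico (n : ℝ) (n + 1)).indicator (fun y => ENNReal.ofReal (l * Real.exp (-l * y))) x := by
  have hshift : x - n ∈ Ico (0 : ℝ) 1 ↔ x ∈ Ico (n : ℝ) (n + 1) := by
    simp only [mem_Ico, sub_nonneg, sub_lt_iff_lt_add']
  by_cases hx : x ∈ Ico (n : ℝ) (n + 1)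
  · have hweight : 0 ≤ (1 - Real.exp (-l)) * (1 - (1 - Real.exp (-l))) ^ n := by
      rw [sub_sub_cancel]
      exact mul_nonneg (sub_nonneg.2 (Real.exp_le_one_iff.2 (by linarith))) (by positivity)
    rw [indicator_of_mem (hshift.2 hx), indicator_of_mem hx, ← ENNReal.ofReal_mul hweight,
      geometric_mul_shifted_density hl]
  · rw [indicator_of_notMem (mt hshift.1 hx), indicator_of_notMem hx, ENNReal.ofReal_zero,
      mul_zero]

/-- Let `λ > 0` and `p = 1 − e^{−λ}`.  If `X` is Geometric(p) (viewed as ℝ-valued),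
`A` is independent of `X` with density `λ e^{−λa}/(1 − e^{−λ})` on `[0,1]`
(an exponential of rate `λ` conditioned to lie in `[0,1]`), then `X + A` is
exponentially distributed with rate `λ`. -/
theorem geometric_plus_truncated_exponential {Ω : Type*} [MeasurableSpace Ω]
    (μ : Measure Ω) [IsProbabilityMeasure μ] (l : ℝ) (hl : 0 < l) (p : ℝ)
    (hp : p = 1 - Real.exp (-l)) (X A : Ω → ℝ) (hX : Measurable X) (hA : Measurable A)
    (hindep : IndepFun X A μ)
    (hXlaw : μ.map X =
      Measure.sum (fun i : ℕ => ENNReal.ofReal (p * (1 - p) ^ i) • Measure.dirac (i : ℝ)))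
    (hAlaw : μ.map A = volume.withDensity (fun a =>
      ENNReal.ofReal (Set.indicator (Set.Icc (0 : ℝ) 1)
        (fun a => l * Real.exp (-l * a) / (1 - Real.exp (-l))) a))) :
    μ.map (fun ω => X ω + A ω) = volume.withDensity (fun x =>
      ENNReal.ofReal (Set.indicator (Set.Ici (0 : ℝ)) (fun x => l * Real.exp (-l * x)) x)) := by
  subst hp
  -- on `[0, 1)` instead of `[0, 1]` the translates tile `[0, ∞)` exactly, with no overlaps
  have hAlaw' : μ.map A = volume.withDensity (fun a => ENNReal.ofReal ((Ico 0 1).indicator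
      (fun a => l * Real.exp (-l * a) / (1 - Real.exp (-l))) a)) :=
    hAlaw.trans <| withDensity_congr_ae <|
      (indicator_ae_eq_of_ae_eq_set Ico_ae_eq_Icc).symm.fun_comp ENNReal.ofReal
  rw [show (fun ω => X ω + A ω) = X + A from rfl, hindep.map_add_eq_map_conv_map hX hA, hXlaw,
    hAlaw', Measure.sum_smul_dirac_conv_withDensity _ _ _
      (Measurable.indicator (by fun_prop) measurableSet_Ico).ennreal_ofReal]
  congr 1
  funext x
  simp_rw [neg_add_eq_sub, ofReal_geometric_mul_shifted_indicator hl, tsum_indicator_Ico_natCast]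
  exact congrFun (indicator_comp_of_zero ENNReal.ofReal_zero) x
end

section
/- Let i be a positive integer and let x be a real number with (1/2)^{1/i} ≤ x < (1/2)^{1/(i+1)}. Then x^{i+3} + x^i < 1. Consequently, for q ∈ (1/2, 1) and k = ⌊ln(1/2)/ln q⌋, one has q^{k+3} < 1 − q^k, so the only powers q^j (j ≥ k+1) that can lie in the interval [1 − q^k, 1/2] are q^{k+1} and q^{k+2}. -/
/-! Put `t = (1/2)^{1/(i+1)}`, so `t^{i+1} = 1/2`. As `x ↦ x^{i+3} + x^i` is increasing on
`[0, ∞)`, it suffices that `t^{i+3} + t^i = (t^3 + 1)/(2t) < 1`, i.e. `(1 - t)(t^2 + t - 1) > 0`;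
this holds because `i ≥ 1` gives `t^2 ≥ t^{i+1} = 1/2`, so `t > 0.7`.
For the second part, the choice of `k` gives `k ≥ 1` and `q^{k+1} < 1/2`, so the first part
applies to `x = q`, and every `q^j` with `j ≥ k + 3` is at most `q^{k+3} < 1 - q^k`. -/

open Real

lemma pow_add_three_add_pow_lt_one_of_pow_succ_eq_half {t : ℝ} {n : ℕ} (ht : 0 ≤ t)
    (hn : 1 ≤ n) (h : t ^ (n + 1) = 1 / 2) : t ^ (n + 3) + t ^ n < 1 := by
  have ht_lt_one : t < 1 := (pow_lt_one_iff_of_nonneg ht n.succ_ne_zero).1 (by rw [h]; norm_num)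
  have ht_sq : 1 / 2 ≤ t ^ 2 := by
    rw [← h]
    exact pow_le_pow_of_le_one ht ht_lt_one.le (by omega)
  have ht_pos : 0 < t := by nlinarith
  have hcubic : t ^ 3 + 1 < 2 * t := by
    have : 0 < t ^ 2 + t - 1 := by nlinarith
    nlinarith [mul_pos (sub_pos.2 ht_lt_one) this]
  have hmul : 2 * t * (t ^ (n + 3) + t ^ n) = t ^ 3 + 1 := by
    calc 2 * t * (t ^ (n + 3) + t ^ n) = 2 * t ^ (n + 1) * t ^ 3 + 2 * t ^ (n + 1) := by ring
      _ = t ^ 3 + 1 := by rw [h]; ring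
  exact lt_of_mul_lt_mul_left (by linarith) (by positivity : 0 ≤ 2 * t)

lemma pow_add_three_add_pow_lt_one {x : ℝ} {n : ℕ} (hx : 0 ≤ x) (hn : 1 ≤ n)
    (h : x ^ (n + 1) < 1 / 2) : x ^ (n + 3) + x ^ n < 1 := by
  set t : ℝ := (1 / 2) ^ (((n + 1 : ℕ) : ℝ)⁻¹)
  have ht : t ^ (n + 1) = 1 / 2 := rpow_inv_natCast_pow (by norm_num) (by omega)
  have hxt : x < t := (pow_lt_pow_iff_left₀ hx (by positivity) (by omega)).1 (ht ▸ h)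
  calc x ^ (n + 3) + x ^ n < t ^ (n + 3) + t ^ n :=
        add_lt_add (pow_lt_pow_left₀ hxt hx (by omega)) (pow_lt_pow_left₀ hxt hx (by omega))
    _ < 1 := pow_add_three_add_pow_lt_one_of_pow_succ_eq_half (by positivity) hn ht

lemma zpow_add_three_lt_one_sub_zpow {q : ℝ} {k : ℤ} (hq : 0 ≤ q) (hk : 1 ≤ k)
    (h : q ^ (k + 1) < 1 / 2) : q ^ (k + 3) < 1 - q ^ k := by
  lift k to ℕ using (by omega)
  have := pow_add_three_add_pow_lt_one hq (by exact_mod_cast hk) (by exact_mod_cast h)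
  norm_cast
  linarith

namespace Real

variable {b x : ℝ}

lemma one_le_floor_logb_of_base_lt_one (hb₀ : 0 < b) (hb₁ : b < 1) (hx : 0 < x) (hxb : x ≤ b) :
    1 ≤ ⌊logb b x⌋ :=
  Int.le_floor.2 <| (le_logb_iff_rpow_le_of_base_lt_one hb₀ hb₁ hx).2 (by simpa using hxb)

lemma zpow_floor_logb_add_one_lt_of_base_lt_one (hb₀ : 0 < b) (hb₁ : b < 1) (hx : 0 < x) :
    b ^ (⌊logb b x⌋ + 1) < x := by
  rw [← rpow_intCast, ← logb_lt_iff_lt_rpow_of_base_lt_one hb₀ hb₁ hx]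
  push_cast
  exact Int.lt_floor_add_one _

end Real

/-- (1) For a positive integer `i` and `(1/2)^{1/i} ≤ x < (1/2)^{1/(i+1)}`,
one has `x^{i+3} + x^i < 1`.  (2) Consequently, for `q ∈ (1/2,1)` and
`k = ⌊ln(1/2)/ln q⌋`, one has `q^{k+3} < 1 − q^k`, so the only powers `q^j`
(`j ≥ k+1`) that can lie in `[1 − q^k, 1/2]` are `q^{k+1}` and `q^{k+2}`. -/
theorem powers_in_interval :
    (∀ i : ℕ, 0 < i → ∀ x : ℝ,
        (1 / 2 : ℝ) ^ ((1 : ℝ) / i) ≤ x → x < (1 / 2 : ℝ) ^ ((1 : ℝ) / (i + 1)) →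
        x ^ (i + 3) + x ^ i < 1) ∧
    (∀ q : ℝ, q ∈ Set.Ioo (1 / 2 : ℝ) 1 → ∀ k : ℤ,
        k = ⌊Real.log (1 / 2) / Real.log q⌋ →
        q ^ (k + 3) < 1 - q ^ k ∧
          ∀ j : ℤ, k + 1 ≤ j → q ^ j ∈ Set.Icc (1 - q ^ k) (1 / 2 : ℝ) →
            j = k + 1 ∨ j = k + 2) := by
  refine ⟨fun i hi x hx_ge hx_lt => ?_, fun q ⟨hq_gt, hq_lt⟩ k hk => ?_⟩
  · have hx : 0 ≤ x := (rpow_nonneg (by norm_num) _).trans hx_ge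
    rw [one_div ((i : ℝ) + 1), lt_rpow_inv_iff_of_pos hx (by norm_num) (by positivity)] at hx_lt
    exact pow_add_three_add_pow_lt_one hx hi (by exact_mod_cast hx_lt)
  · have hq : 0 < q := by linarith
    rw [log_div_log] at hk
    have hk_one : 1 ≤ k := hk ▸ one_le_floor_logb_of_base_lt_one hq hq_lt (by norm_num) hq_gt.le
    have hk_succ : q ^ (k + 1) < 1 / 2 :=
      hk ▸ zpow_floor_logb_add_one_lt_of_base_lt_one hq hq_lt (by norm_num)
    have hgap := zpow_add_three_lt_one_sub_zpow hq.le hk_one hk_succ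
    refine ⟨hgap, fun j hj ⟨hj_ge, _⟩ => ?_⟩
    by_contra hne
    have : q ^ j ≤ q ^ (k + 3) := zpow_le_zpow_right_of_le_one₀ hq hq_lt.le (by omega)
    linarith
end

section
/- Let p̄ ∈ (0, 1/2) and suppose there exist positive integers i and j with (1−p̄)^i + (1−p̄)^j = 1. Define ρ₋(p) = (h(p) − m(p)²)/σ(p)², where h(p) = ∫₀¹ ⌊ln(1−u)/ln(1−p)⌋·⌊ln(u)/ln(1−p)⌋ du, m(p) = (1−p)/p and σ(p)² = (1−p)/p². Then the left and right one-sided derivatives of ρ₋ at p̄ exist and are unequal; in particular ρ₋ is not differentiable at p̄, i.e., the derivative of ρ₋ is discontinuous at p̄. -/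
/-!
With `q = 1 - p`, the floors `⌊ln(1-u)/ln q⌋` and `⌊ln u/ln q⌋` exceed `k` and `l` exactly when
`1 - q^(k+1) ≤ u` and `u ≤ q^(l+1)`, so `h(p) = ∑ₖₗ (q^(k+1) + q^(l+1) - 1)⁺`, a finite sum near
any `p̄ ∈ (0,1)`. Each summand is the positive part of a smooth function of `p` with negative
derivative, so it is smooth where that function does not vanish, and at a zero its left
derivative is the (negative) derivative while its right derivative is `0`. The hypothesis
`(1-p̄)^i + (1-p̄)^j = 1` says the summand `(i-1, j-1)` vanishes at `p̄`, so the one-sided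
derivatives of `h`, hence of `ρ₋ = (h - m²)/σ²`, differ.
-/

open Set Filter Topology MeasureTheory

section MaxZero

variable {f : ℝ → ℝ} {f' x : ℝ}

theorem HasDerivAt.max_zero_of_ne (hf : HasDerivAt f f' x) (hx : f x ≠ 0) :
    HasDerivAt (fun y => max (f y) 0) (if 0 < f x then f' else 0) x := by
  rcases hx.lt_or_gt with hneg | hpos
  · rw [if_neg hneg.not_gt]
    refine (hasDerivAt_const x (0 : ℝ)).congr_of_eventuallyEq ?_
    filter_upwards [hf.continuousAt.eventually_lt_const hneg] with y hy using max_eq_right hy.le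
  · rw [if_pos hpos]
    refine hf.congr_of_eventuallyEq ?_
    filter_upwards [hf.continuousAt.eventually_const_lt hpos] with y hy using max_eq_left hy.le

theorem HasDerivAt.max_zero_Iio (hf : HasDerivAt f f' x) (hf' : f' < 0) :
    HasDerivWithinAt (fun y => max (f y) 0) (if 0 ≤ f x then f' else 0) (Iio x) x := by
  by_cases hx : f x = 0
  · rw [if_pos hx.ge]
    refine hf.hasDerivWithinAt.congr_of_eventuallyEq ?_ (by simp [hx])
    filter_upwards [nhdsWithin_le_nhds (eventually_nhdsWithin_sign_eq_of_deriv_neg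
      (hf.deriv ▸ hf') hx), self_mem_nhdsWithin] with y hsign hy
    rw [sign_eq_one_iff.2 (sub_pos.2 hy), sign_eq_one_iff] at hsign
    exact max_eq_left hsign.le
  · simpa only [(Ne.symm hx).le_iff_lt] using (hf.max_zero_of_ne hx).hasDerivWithinAt

theorem HasDerivAt.max_zero_Ioi (hf : HasDerivAt f f' x) (hf' : f' < 0) :
    HasDerivWithinAt (fun y => max (f y) 0) (if 0 < f x then f' else 0) (Ioi x) x := by
  by_cases hx : f x = 0
  · rw [if_neg hx.not_gt]
    refine (hasDerivWithinAt_const x _ (0 : ℝ)).congr_of_eventuallyEq ?_ (by simp [hx])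
    filter_upwards [nhdsWithin_le_nhds (eventually_nhdsWithin_sign_eq_of_deriv_neg
      (hf.deriv ▸ hf') hx), self_mem_nhdsWithin] with y hsign hy
    rw [sign_eq_neg_one_iff.2 (sub_neg.2 hy), sign_eq_neg_one_iff] at hsign
    exact max_eq_right hsign.le
  · exact (hf.max_zero_of_ne hx).hasDerivWithinAt

end MaxZero

theorem exists_hasDerivWithinAt_sum_max_zero_lt {ι : Type*} {T : Finset ι} {f : ι → ℝ → ℝ}
    {f' : ι → ℝ} {x : ℝ} (hf : ∀ a ∈ T, HasDerivAt (f a) (f' a) x) (hf' : ∀ a ∈ T, f' a < 0)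
    (hzero : ∃ a ∈ T, f a x = 0) :
    ∃ dL dR : ℝ, HasDerivWithinAt (fun y => ∑ a ∈ T, max (f a y) 0) dL (Iio x) x ∧
      HasDerivWithinAt (fun y => ∑ a ∈ T, max (f a y) 0) dR (Ioi x) x ∧ dL < dR := by
  refine ⟨_, _, HasDerivWithinAt.fun_sum fun a ha => (hf a ha).max_zero_Iio (hf' a ha),
    HasDerivWithinAt.fun_sum fun a ha => (hf a ha).max_zero_Ioi (hf' a ha), ?_⟩
  obtain ⟨a, ha, hfa⟩ := hzero
  refine Finset.sum_lt_sum (fun b hb => ?_) ⟨a, ha, by simp [hfa, hf' a ha]⟩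
  split_ifs <;> linarith [hf' b hb]

theorem exists_hasDerivWithinAt_sub_div_ne {H g w : ℝ → ℝ} {s t : Set ℝ} {hs ht x : ℝ}
    (hHs : HasDerivWithinAt H hs s x) (hHt : HasDerivWithinAt H ht t x)
    (hg : DifferentiableAt ℝ g x) (hw : DifferentiableAt ℝ w x) (hwx : w x ≠ 0) (hne : hs ≠ ht) :
    ∃ ds dt : ℝ, HasDerivWithinAt (fun y => (H y - g y) / w y) ds s x ∧
      HasDerivWithinAt (fun y => (H y - g y) / w y) dt t x ∧ ds ≠ dt := by
  refine ⟨_, _, (hHs.sub hg.hasDerivAt.hasDerivWithinAt).div hw.hasDerivAt.hasDerivWithinAt hwx,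
    (hHt.sub hg.hasDerivAt.hasDerivWithinAt).div hw.hasDerivAt.hasDerivWithinAt hwx,
    fun h => hne ?_⟩
  rw [div_left_inj' (pow_ne_zero 2 hwx), sub_left_inj, mul_left_inj' hwx, sub_left_inj] at h
  exact h

theorem not_differentiableAt_of_hasDerivWithinAt_Iio_Ioi {f : ℝ → ℝ} {a b x : ℝ}
    (ha : HasDerivWithinAt f a (Iio x) x) (hb : HasDerivWithinAt f b (Ioi x) x) (hab : a ≠ b) :
    ¬DifferentiableAt ℝ f x := fun hd =>
  hab <| ((uniqueDiffWithinAt_Iio x).eq_deriv _ ha hd.hasDerivAt.hasDerivWithinAt).trans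
    ((uniqueDiffWithinAt_Ioi x).eq_deriv _ hb hd.hasDerivAt.hasDerivWithinAt).symm

/-- The length of `[1 - q^(k+1), q^(l+1)]`, where both floors in `h` exceed `k` and `l`
(negative when that interval is empty). -/
def overlap (q : ℝ) (kl : ℕ × ℕ) : ℝ := q ^ (kl.1 + 1) + q ^ (kl.2 + 1) - 1

theorem le_pow_succ_iff_lt_floor_log_div_log {q v : ℝ} (hq0 : 0 < q) (hq1 : q < 1) (hv : 0 < v)
    (n : ℕ) : v ≤ q ^ (n + 1) ↔ (n : ℤ) < ⌊Real.log v / Real.log q⌋ := by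
  rw [← Real.log_le_log_iff hv (pow_pos hq0 _), Real.log_pow,
    ← le_div_iff_of_neg (Real.log_neg hq0 hq1), Int.lt_iff_add_one_le, Int.le_floor]
  push_cast
  rfl

theorem floor_log_div_log_nonneg {q v : ℝ} (hq0 : 0 < q) (hq1 : q < 1) (hv0 : 0 < v)
    (hv1 : v ≤ 1) : 0 ≤ ⌊Real.log v / Real.log q⌋ :=
  Int.floor_nonneg.2 (div_nonneg_of_nonpos (Real.log_nonpos hv0.le hv1) (Real.log_neg hq0 hq1).le)

theorem ofReal_floor_mul_floor_eq_tsum_indicator {q u : ℝ} (hq0 : 0 < q) (hq1 : q < 1)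
    (hu0 : 0 < u) (hu1 : u < 1) :
    ENNReal.ofReal ((⌊Real.log (1 - u) / Real.log q⌋ : ℝ) * (⌊Real.log u / Real.log q⌋ : ℝ)) =
      ∑' kl : ℕ × ℕ, (Icc (1 - q ^ (kl.1 + 1)) (q ^ (kl.2 + 1))).indicator 1 u := by
  obtain ⟨A, hA⟩ := Int.eq_ofNat_of_zero_le
    (floor_log_div_log_nonneg hq0 hq1 (sub_pos.2 hu1) (by linarith))
  obtain ⟨B, hB⟩ := Int.eq_ofNat_of_zero_le (floor_log_div_log_nonneg hq0 hq1 hu0 hu1.le)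
  have hmem : ∀ kl : ℕ × ℕ, u ∈ Icc (1 - q ^ (kl.1 + 1)) (q ^ (kl.2 + 1)) ↔
      kl ∈ Finset.range A ×ˢ Finset.range B := by
    rintro ⟨k, l⟩
    rw [Finset.mem_product, Finset.mem_range, Finset.mem_range, mem_Icc, sub_le_comm,
      le_pow_succ_iff_lt_floor_log_div_log hq0 hq1 (sub_pos.2 hu1),
      le_pow_succ_iff_lt_floor_log_div_log hq0 hq1 hu0, hA, hB]
    norm_cast
  rw [hA, hB, tsum_eq_sum (s := Finset.range A ×ˢ Finset.range B)
    fun kl hkl => indicator_of_notMem (mt (hmem kl).1 hkl) _]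
  simp_rw [indicator_apply, hmem, Finset.sum_ite_mem, Finset.inter_self]
  simp [Finset.card_product]

theorem volume_Icc_inter_Ioo_zero_one {a b : ℝ} (ha : 0 ≤ a) (hb : b ≤ 1) :
    volume (Icc a b ∩ Ioo 0 1) = ENNReal.ofReal (b - a) := by
  refine le_antisymm ((measure_mono inter_subset_left).trans Real.volume_Icc.le) ?_
  rw [← Real.volume_Ioo]
  exact measure_mono fun y hy => ⟨Ioo_subset_Icc_self hy, ha.trans_lt hy.1, hy.2.trans_le hb⟩

theorem lintegral_ofReal_floor_mul_floor {q : ℝ} (hq0 : 0 < q) (hq1 : q < 1) :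
    ∫⁻ u in Ioo 0 1,
        ENNReal.ofReal ((⌊Real.log (1 - u) / Real.log q⌋ : ℝ) * (⌊Real.log u / Real.log q⌋ : ℝ)) =
      ∑' kl, ENNReal.ofReal (overlap q kl) := by
  rw [setLIntegral_congr_fun measurableSet_Ioo
    fun u hu => ofReal_floor_mul_floor_eq_tsum_indicator hq0 hq1 hu.1 hu.2,
    lintegral_tsum fun kl => (measurable_one.indicator measurableSet_Icc).aemeasurable]
  refine tsum_congr fun kl => ?_
  rw [lintegral_indicator_one measurableSet_Icc, Measure.restrict_apply measurableSet_Icc,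
    volume_Icc_inter_Ioo_zero_one (sub_nonneg.2 (pow_le_one₀ hq0.le hq1.le))
      (pow_le_one₀ hq0.le hq1.le), overlap]
  congr 1
  ring

theorem overlap_nonpos_of_notMem {q : ℝ} {N : ℕ} (hq0 : 0 < q) (hq1 : q < 1)
    (hN : q ^ N < 1 - q) {kl : ℕ × ℕ} (hkl : kl ∉ Finset.range N ×ˢ Finset.range N) :
    overlap q kl ≤ 0 := by
  have hsmall : ∀ m, N ≤ m → q ^ (m + 1) ≤ q ^ N := fun m hm =>
    pow_le_pow_of_le_one hq0.le hq1.le (by omega)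
  have hle : ∀ m : ℕ, q ^ (m + 1) ≤ q := fun m => pow_le_of_le_one hq0.le hq1.le (by omega)
  obtain ⟨k, l⟩ := kl
  simp only [Finset.mem_product, Finset.mem_range, not_and_or, not_lt] at hkl
  rw [overlap]
  rcases hkl with hk | hl
  · linarith [hsmall k hk, hle l]
  · linarith [hsmall l hl, hle k]

theorem integral_floor_mul_floor_eq_sum_overlap {q : ℝ} {N : ℕ} (hq0 : 0 < q) (hq1 : q < 1)
    (hN : q ^ N < 1 - q) :
    ∫ u in Ioo 0 1, (⌊Real.log (1 - u) / Real.log q⌋ : ℝ) * (⌊Real.log u / Real.log q⌋ : ℝ) =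
      ∑ kl ∈ Finset.range N ×ˢ Finset.range N, max (overlap q kl) 0 := by
  have hnonneg : ∀ u ∈ Ioo (0 : ℝ) 1,
      0 ≤ (⌊Real.log (1 - u) / Real.log q⌋ : ℝ) * (⌊Real.log u / Real.log q⌋ : ℝ) :=
    fun u hu => mul_nonneg
      (Int.cast_nonneg (floor_log_div_log_nonneg hq0 hq1 (sub_pos.2 hu.2) (by linarith [hu.1])))
      (Int.cast_nonneg (floor_log_div_log_nonneg hq0 hq1 hu.1 hu.2.le))
  have hmeas : Measurable fun u : ℝ =>
      (⌊Real.log (1 - u) / Real.log q⌋ : ℝ) * (⌊Real.log u / Real.log q⌋ : ℝ) := by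
    fun_prop
  rw [integral_eq_lintegral_of_nonneg_ae ((ae_restrict_iff' measurableSet_Ioo).2
      (ae_of_all _ hnonneg)) hmeas.aestronglyMeasurable,
    lintegral_ofReal_floor_mul_floor hq0 hq1,
    tsum_eq_sum fun kl hkl => ENNReal.ofReal_of_nonpos (overlap_nonpos_of_notMem hq0 hq1 hN hkl),
    ENNReal.toReal_sum fun _ _ => ENNReal.ofReal_ne_top]
  simp_rw [ENNReal.toReal_ofReal']

theorem hasDerivAt_overlap_one_sub (kl : ℕ × ℕ) (x : ℝ) :
    HasDerivAt (fun p => overlap (1 - p) kl)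
      (-((kl.1 + 1) * (1 - x) ^ kl.1 + (kl.2 + 1) * (1 - x) ^ kl.2)) x := by
  have hsub : HasDerivAt (fun p : ℝ => 1 - p) (-1) x := (hasDerivAt_id x).const_sub 1
  refine (((hsub.pow (kl.1 + 1)).add (hsub.pow (kl.2 + 1))).sub_const 1).congr_deriv ?_
  simp only [Nat.cast_add, Nat.cast_one, Nat.add_sub_cancel]
  ring

theorem overlap_one_sub_deriv_neg (kl : ℕ × ℕ) {x : ℝ} (hx : x < 1) :
    -((kl.1 + 1) * (1 - x) ^ kl.1 + (kl.2 + 1) * (1 - x) ^ kl.2 : ℝ) < 0 := by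
  have hq : 0 < 1 - x := sub_pos.2 hx
  exact neg_neg_of_pos (add_pos (mul_pos (by positivity) (pow_pos hq _))
    (mul_pos (by positivity) (pow_pos hq _)))

theorem lt_of_pow_add_pow_eq_one {q : ℝ} {i j N : ℕ} (hq0 : 0 < q) (hq1 : q < 1) (hj : 0 < j)
    (hij : q ^ i + q ^ j = 1) (hN : q ^ N < 1 - q) : i < N := by
  have hqj : q ^ j ≤ q := pow_le_of_le_one hq0.le hq1.le hj.ne'
  exact (pow_lt_pow_iff_right_of_lt_one₀ hq0 hq1).1 (by linarith)

/-- The minimum correlation `ρ₋(p) = (h(p) − m(p)²)/σ(p)²` between two Geometric(p)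
random variables, where `h(p) = ∫₀¹ ⌊ln(1−u)/ln(1−p)⌋ ⌊ln u/ln(1−p)⌋ du`,
`m(p) = (1−p)/p`, `σ(p)² = (1−p)/p²`. -/
noncomputable def rhoMinus (p : ℝ) : ℝ :=
  ((∫ u in Set.Ioo (0 : ℝ) 1,
      (⌊Real.log (1 - u) / Real.log (1 - p)⌋ : ℝ) * (⌊Real.log u / Real.log (1 - p)⌋ : ℝ))
    - ((1 - p) / p) ^ 2) / ((1 - p) / p ^ 2)

theorem rhoMinus_eventuallyEq_sum_overlap {x : ℝ} {N : ℕ} (hx0 : 0 < x) (hx1 : x < 1)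
    (hN : (1 - x) ^ N < x) :
    rhoMinus =ᶠ[𝓝 x] fun p =>
      (∑ kl ∈ Finset.range N ×ˢ Finset.range N, max (overlap (1 - p) kl) 0 - ((1 - p) / p) ^ 2) /
        ((1 - p) / p ^ 2) := by
  have hcont : Continuous fun p : ℝ => (1 - p) ^ N := by fun_prop
  filter_upwards [Ioo_mem_nhds hx0 hx1, hcont.continuousAt.eventually_lt continuousAt_id hN]
    with p hp hpN
  rw [rhoMinus, integral_floor_mul_floor_eq_sum_overlap (sub_pos.2 hp.2) (by linarith [hp.1])
    (by rwa [sub_sub_cancel])]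

/-- If `p̄ ∈ (0,1/2)` and there are positive integers `i, j` with
`(1−p̄)^i + (1−p̄)^j = 1`, then the left and right one-sided derivatives of `ρ₋`
at `p̄` exist but are unequal; in particular `ρ₋` is not differentiable at `p̄`,
i.e. its derivative is discontinuous there. -/
theorem rhoMinus_deriv_discontinuous (pb : ℝ) (hpb : pb ∈ Set.Ioo (0 : ℝ) (1 / 2))
    (i j : ℕ) (hi : 0 < i) (hj : 0 < j) (hij : (1 - pb) ^ i + (1 - pb) ^ j = 1) :
    (∃ dL dR : ℝ, HasDerivWithinAt rhoMinus dL (Set.Iio pb) pb ∧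
        HasDerivWithinAt rhoMinus dR (Set.Ioi pb) pb ∧ dL ≠ dR) ∧
      ¬ DifferentiableAt ℝ rhoMinus pb := by
  obtain ⟨hpb0, hpb1⟩ := hpb
  have hq0 : 0 < 1 - pb := by linarith
  have hq1 : 1 - pb < 1 := by linarith
  obtain ⟨N, hN⟩ := exists_pow_lt_of_lt_one hpb0 hq1
  have hN' : (1 - pb) ^ N < 1 - (1 - pb) := by rwa [sub_sub_cancel]
  have hzero : ∃ kl ∈ Finset.range N ×ˢ Finset.range N, overlap (1 - pb) kl = 0 := by
    refine ⟨(i - 1, j - 1), ?_, ?_⟩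
    · have hiN := lt_of_pow_add_pow_eq_one hq0 hq1 hj hij hN'
      have hjN := lt_of_pow_add_pow_eq_one hq0 hq1 hi ((add_comm _ _).trans hij) hN'
      simp only [Finset.mem_product, Finset.mem_range]
      omega
    · simp [overlap, Nat.sub_add_cancel hi, Nat.sub_add_cancel hj, hij]
  obtain ⟨hL, hR, hHL, hHR, hLR⟩ := exists_hasDerivWithinAt_sum_max_zero_lt
    (fun kl _ => hasDerivAt_overlap_one_sub kl pb)
    (fun kl _ => overlap_one_sub_deriv_neg kl (by linarith)) hzero
  obtain ⟨dL, dR, hdL, hdR, hne⟩ := exists_hasDerivWithinAt_sub_div_ne hHL hHR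
    (g := fun p => ((1 - p) / p) ^ 2) (w := fun p => (1 - p) / p ^ 2)
    (by fun_prop (disch := exact hpb0.ne')) (by fun_prop (disch := positivity))
    (div_ne_zero hq0.ne' (by positivity)) hLR.ne
  have hev := rhoMinus_eventuallyEq_sum_overlap hpb0 (by linarith) hN
  have hdL' := hdL.congr_of_eventuallyEq (hev.filter_mono nhdsWithin_le_nhds) hev.eq_of_nhds
  have hdR' := hdR.congr_of_eventuallyEq (hev.filter_mono nhdsWithin_le_nhds) hev.eq_of_nhds
  exact ⟨⟨dL, dR, hdL', hdR', hne⟩, not_differentiableAt_of_hasDerivWithinAt_Iio_Ioi hdL' hdR' hne⟩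
end

section
/- Fix p₂ ∈ (0,1) and let p̄₁ ∈ (0,1) satisfy p̄₁ + p₂ < 1, and suppose there exist positive integers i and j with 1 − (1−p̄₁)^i = (1−p₂)^j. Define h(p₁) = ∫₀¹ ⌊ln(1−u)/ln(1−p₁)⌋·⌊ln(u)/ln(1−p₂)⌋ du for p₁ ∈ (0,1). Then the left and right one-sided derivatives of h at p̄₁ exist and are unequal; consequently the partial derivative ∂ρ₋(p₁,p₂)/∂p₁ of the minimum correlation ρ₋(p₁,p₂) = (h(p₁) − m₁m₂)/(σ₁σ₂) has a discontinuity at p̄₁. -/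
/-!
Fix `N` with `(1 - p₁)^(N+1) < p₂` and `(1 - p₂)^(N+1) < p₁` for all `p₁` near `p̄₁`.
Since `⌊ln x / ln q⌋ = #{k ≥ 1 | x ≤ q^k}`, the integrand is a sum of indicators of the
intervals `[1 - (1-p₁)^k, (1-p₂)^m]`, so near `p̄₁`
`h(p₁) = ∑_{k,m ≤ N} max 0 ((1-p₁)^k + (1-p₂)^m - 1)`.
Each summand is the positive part of a strictly decreasing function, so its left derivative
is at most its right one, strictly exactly where it vanishes; the term `(i, j)` vanishes at
`p̄₁`, so the one-sided derivatives of `h` differ. As `ρ₋ = (h - m₁m₂)/(σ₁σ₂)` with `m₁m₂`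
and `σ₁σ₂ ≠ 0` smooth, differentiability of `ρ₋` would force that of `h`.
-/

open MeasureTheory

/-- `h p₂ p₁ = ∫₀¹ ⌊ln(1−u)/ln(1−p₁)⌋ · ⌊ln u/ln(1−p₂)⌋ du`, the mean product
`E[X₁X₂]` of the countermonotonic coupling of Geometric(p₁) and Geometric(p₂). -/
noncomputable def antitheticMeanProduct (p₂ p₁ : ℝ) : ℝ :=
  ∫ u in Set.Ioo (0 : ℝ) 1,
    (⌊Real.log (1 - u) / Real.log (1 - p₁)⌋ : ℝ) * (⌊Real.log u / Real.log (1 - p₂)⌋ : ℝ)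

open Filter Topology Finset

section PositivePart

variable {f : ℝ → ℝ} {f' x : ℝ}

theorem HasDerivAt.eventually_nhdsLT_lt_of_neg (hf : HasDerivAt f f' x) (hf' : f' < 0) :
    ∀ᶠ y in 𝓝[<] x, f x < f y := by
  filter_upwards [(hasDerivAt_iff_tendsto_slope_left_right.1 hf).1.eventually (gt_mem_nhds hf'),
    self_mem_nhdsWithin] with y hslope hy
  rwa [slope_comm, slope_neg_iff_of_le hy.le] at hslope

theorem HasDerivAt.eventually_nhdsGT_lt_of_neg (hf : HasDerivAt f f' x) (hf' : f' < 0) :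
    ∀ᶠ y in 𝓝[>] x, f y < f x := by
  filter_upwards [(hasDerivAt_iff_tendsto_slope_left_right.1 hf).2.eventually (gt_mem_nhds hf'),
    self_mem_nhdsWithin] with y hslope hy
  rwa [slope_neg_iff_of_le hy.le] at hslope

theorem HasDerivAt.hasDerivWithinAt_Iio_max_zero (hf : HasDerivAt f f' x) (hf' : f' < 0) :
    HasDerivWithinAt (fun y => max 0 (f y)) (if 0 ≤ f x then f' else 0) (Set.Iio x) x := by
  split_ifs with hx
  · refine hf.hasDerivWithinAt.congr_of_eventuallyEq ?_ (max_eq_right hx)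
    filter_upwards [hf.eventually_nhdsLT_lt_of_neg hf'] with y hy
    exact max_eq_right (hx.trans hy.le)
  · rw [not_le] at hx
    refine (hasDerivWithinAt_const x _ 0).congr_of_eventuallyEq ?_ (max_eq_left hx.le)
    filter_upwards [nhdsWithin_le_nhds (hf.continuousAt.eventually_lt continuousAt_const hx)]
      with y hy
    exact max_eq_left hy.le

theorem HasDerivAt.hasDerivWithinAt_Ioi_max_zero (hf : HasDerivAt f f' x) (hf' : f' < 0) :
    HasDerivWithinAt (fun y => max 0 (f y)) (if 0 < f x then f' else 0) (Set.Ioi x) x := by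
  split_ifs with hx
  · refine hf.hasDerivWithinAt.congr_of_eventuallyEq ?_ (max_eq_right hx.le)
    filter_upwards [nhdsWithin_le_nhds (continuousAt_const.eventually_lt hf.continuousAt hx)]
      with y hy
    exact max_eq_right hy.le
  · rw [not_lt] at hx
    refine (hasDerivWithinAt_const x _ 0).congr_of_eventuallyEq ?_ (max_eq_left hx)
    filter_upwards [hf.eventually_nhdsGT_lt_of_neg hf'] with y hy
    exact max_eq_left (hy.le.trans hx)

end PositivePart

theorem exists_hasDerivWithinAt_Iio_Ioi_sum_max_zero {ι : Type*} {s : Finset ι}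
    {f : ι → ℝ → ℝ} {f' : ι → ℝ} {x : ℝ} (hf : ∀ i ∈ s, HasDerivAt (f i) (f' i) x)
    (hf' : ∀ i ∈ s, f' i < 0) {i₀ : ι} (hi₀ : i₀ ∈ s) (hzero : f i₀ x = 0) :
    ∃ dL dR : ℝ, HasDerivWithinAt (fun y => ∑ i ∈ s, max 0 (f i y)) dL (Set.Iio x) x ∧
      HasDerivWithinAt (fun y => ∑ i ∈ s, max 0 (f i y)) dR (Set.Ioi x) x ∧ dL < dR := by
  refine ⟨_, _, .fun_sum fun i hi => (hf i hi).hasDerivWithinAt_Iio_max_zero (hf' i hi),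
    .fun_sum fun i hi => (hf i hi).hasDerivWithinAt_Ioi_max_zero (hf' i hi),
    sum_lt_sum (fun i hi => ?_) ⟨i₀, hi₀, ?_⟩⟩
  · split_ifs <;> linarith [hf' i hi]
  · simp [hzero, hf' i₀ hi₀]

theorem not_differentiableAt_of_hasDerivWithinAt_Iio_Ioi_s18 {f : ℝ → ℝ} {dL dR x : ℝ}
    (hL : HasDerivWithinAt f dL (Set.Iio x) x) (hR : HasDerivWithinAt f dR (Set.Ioi x) x)
    (hne : dL ≠ dR) : ¬ DifferentiableAt ℝ f x := by
  intro hf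
  rw [← hL.derivWithin (uniqueDiffWithinAt_Iio x), ← hR.derivWithin (uniqueDiffWithinAt_Ioi x),
    hf.derivWithin (uniqueDiffWithinAt_Iio x), hf.derivWithin (uniqueDiffWithinAt_Ioi x)] at hne
  exact hne rfl

theorem DifferentiableAt.of_div_sub {𝕜 E : Type*} [NontriviallyNormedField 𝕜]
    [NormedAddCommGroup E] [NormedSpace 𝕜 E] {g m s : E → 𝕜} {x : E}
    (hρ : DifferentiableAt 𝕜 (fun y => (g y - m y) / s y) x) (hm : DifferentiableAt 𝕜 m x)
    (hs : DifferentiableAt 𝕜 s x) (hsx : s x ≠ 0) : DifferentiableAt 𝕜 g x := by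
  refine ((hρ.mul hs).add hm).congr_of_eventuallyEq ?_
  filter_upwards [hs.continuousAt.eventually_ne hsx] with y hy
  simp [div_mul_cancel₀ _ hy]

section FloorLog

variable {q x : ℝ}

theorem natCast_le_floor_log_div_log_iff (hq₀ : 0 < q) (hq₁ : q < 1) (hx : 0 < x) (k : ℕ) :
    (k : ℤ) ≤ ⌊Real.log x / Real.log q⌋ ↔ x ≤ q ^ k := by
  rw [Int.le_floor, Real.log_div_log, Real.le_logb_iff_rpow_le_of_base_lt_one hq₀ hq₁ hx]
  norm_cast

theorem floor_log_div_log_eq_card (hq₀ : 0 < q) (hq₁ : q < 1) (hx₀ : 0 < x) (hx₁ : x ≤ 1)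
    {N : ℕ} (hN : q ^ (N + 1) < x) :
    (⌊Real.log x / Real.log q⌋ : ℝ) = #{k ∈ Icc 1 N | x ≤ q ^ k} := by
  set n := ⌊Real.log x / Real.log q⌋
  have hle := natCast_le_floor_log_div_log_iff hq₀ hq₁ hx₀
  have hn₀ : 0 ≤ n := by simpa using (hle 0).2 (by simpa using hx₁)
  have hnN : n < N + 1 := by
    by_contra h
    exact hN.not_ge ((hle (N + 1)).1 (by push_cast; omega))
  have hfilter : {k ∈ Icc 1 N | x ≤ q ^ k} = Icc 1 n.toNat := by
    ext k
    simp only [mem_filter, mem_Icc, ← hle]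
    omega
  rw [hfilter, Nat.card_Icc, Nat.add_sub_cancel, ← Int.cast_natCast, Int.toNat_of_nonneg hn₀]

theorem card_filter_le_pow_eq_zero (hq₀ : 0 ≤ q) (hq₁ : q < 1) (hx : q < x) (N : ℕ) :
    #{k ∈ Icc 1 N | x ≤ q ^ k} = 0 :=
  card_eq_zero.2 <| filter_eq_empty_iff.2 fun k hk =>
    not_le.2 ((pow_le_of_le_one hq₀ hq₁.le (by grind)).trans_lt hx)

end FloorLog

theorem sum_indicator_Icc_eq_card_mul_card (q₁ q₂ u : ℝ) (N : ℕ) :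
    ∑ km ∈ Icc 1 N ×ˢ Icc 1 N, (Set.Icc (1 - q₁ ^ km.1) (q₂ ^ km.2)).indicator 1 u =
      (#{k ∈ Icc 1 N | 1 - u ≤ q₁ ^ k} * #{m ∈ Icc 1 N | u ≤ q₂ ^ m} : ℝ) := by
  rw [natCast_card_filter, natCast_card_filter, sum_mul_sum, ← sum_product']
  refine sum_congr rfl fun km _ => ?_
  simp only [Set.indicator_apply, Set.mem_Icc, sub_le_comm (b := u), ite_zero_mul_ite_zero,
    Pi.one_apply, mul_one]

theorem floor_mul_floor_eq_sum_indicator {p₁ p₂ u : ℝ} (hp₁ : p₁ ∈ Set.Ioo 0 1)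
    (hp₂ : p₂ ∈ Set.Ioo 0 1) (hu : u ∈ Set.Ioo 0 1) {N : ℕ} (hN₁ : (1 - p₁) ^ (N + 1) < p₂)
    (hN₂ : (1 - p₂) ^ (N + 1) < p₁) :
    (⌊Real.log (1 - u) / Real.log (1 - p₁)⌋ : ℝ) * (⌊Real.log u / Real.log (1 - p₂)⌋ : ℝ) =
      ∑ km ∈ Icc 1 N ×ˢ Icc 1 N,
        (Set.Icc (1 - (1 - p₁) ^ km.1) ((1 - p₂) ^ km.2)).indicator 1 u := by
  obtain ⟨hp₁₀, hp₁₁⟩ := hp₁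
  obtain ⟨hp₂₀, hp₂₁⟩ := hp₂
  obtain ⟨hu₀, hu₁⟩ := hu
  have hfloor₁ (h : (1 - p₁) ^ (N + 1) < 1 - u) :=
    floor_log_div_log_eq_card (by linarith) (by linarith) (by linarith) (by linarith) h
  have hfloor₂ (h : (1 - p₂) ^ (N + 1) < u) :=
    floor_log_div_log_eq_card (by linarith) (by linarith) hu₀ hu₁.le h
  rw [sum_indicator_Icc_eq_card_mul_card]
  -- Where one of the two count formulas may fail, the other factor vanishes on both sides.
  by_cases hu₂ : (1 - p₂) ^ (N + 1) < u
  · by_cases hu₁ : (1 - p₁) ^ (N + 1) < 1 - u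
    · rw [hfloor₁ hu₁, hfloor₂ hu₂]
    · rw [hfloor₂ hu₂, card_filter_le_pow_eq_zero (by linarith) (by linarith) (by linarith)]
      simp
  · have hpow : (1 - p₁) ^ (N + 1) ≤ 1 - p₁ :=
      pow_le_of_le_one (by linarith) (by linarith) N.succ_ne_zero
    rw [hfloor₁ (by linarith), card_filter_le_pow_eq_zero (by linarith) (by linarith) (by linarith)]
    simp

theorem setIntegral_Ioo_indicator_Icc {a b : ℝ} (ha : 0 < a) (hb : b < 1) :
    ∫ u in Set.Ioo 0 1, (Set.Icc a b).indicator 1 u = max 0 (b - a) := by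
  have hsub : Set.Icc a b ⊆ Set.Ioo 0 1 := fun u hu => ⟨ha.trans_le hu.1, hu.2.trans_lt hb⟩
  rw [integral_indicator_one measurableSet_Icc, measureReal_restrict_apply measurableSet_Icc,
    Set.inter_eq_self_of_subset_left hsub, Real.volume_real_Icc, max_comm]

theorem antitheticMeanProduct_eq_sum {p₁ p₂ : ℝ} (hp₁ : p₁ ∈ Set.Ioo 0 1)
    (hp₂ : p₂ ∈ Set.Ioo 0 1) {N : ℕ} (hN₁ : (1 - p₁) ^ (N + 1) < p₂)
    (hN₂ : (1 - p₂) ^ (N + 1) < p₁) :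
    antitheticMeanProduct p₂ p₁ =
      ∑ km ∈ Icc 1 N ×ˢ Icc 1 N, max 0 ((1 - p₁) ^ km.1 + (1 - p₂) ^ km.2 - 1) := by
  have hint (a b : ℝ) : IntegrableOn ((Set.Icc a b).indicator 1) (Set.Ioo 0 1) :=
    (integrableOn_const (C := (1 : ℝ)) measure_Ioo_lt_top.ne).indicator measurableSet_Icc
  rw [antitheticMeanProduct, setIntegral_congr_fun measurableSet_Ioo
    fun u hu => floor_mul_floor_eq_sum_indicator hp₁ hp₂ hu hN₁ hN₂,
    integral_finsetSum _ fun km _ => hint _ _]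
  refine sum_congr rfl fun km hkm => ?_
  obtain ⟨hk, hm⟩ := mem_product.1 hkm
  have ha : 0 < 1 - (1 - p₁) ^ km.1 :=
    sub_pos.2 (pow_lt_one₀ (by linarith [hp₁.2]) (by linarith [hp₁.1]) (by grind))
  have hb : (1 - p₂) ^ km.2 < 1 :=
    pow_lt_one₀ (by linarith [hp₂.2]) (by linarith [hp₂.1]) (by grind)
  rw [setIntegral_Ioo_indicator_Icc ha hb]
  ring_nf

theorem antitheticMeanProduct_eventuallyEq_sum {p₁ p₂ : ℝ} (hp₁ : p₁ ∈ Set.Ioo 0 1)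
    (hp₂ : p₂ ∈ Set.Ioo 0 1) {N : ℕ} (hN₁ : (1 - p₁) ^ (N + 1) < p₂)
    (hN₂ : (1 - p₂) ^ (N + 1) < p₁) :
    antitheticMeanProduct p₂ =ᶠ[𝓝 p₁]
      fun p => ∑ km ∈ Icc 1 N ×ˢ Icc 1 N, max 0 ((1 - p) ^ km.1 + (1 - p₂) ^ km.2 - 1) := by
  have hN₁' : ∀ᶠ p in 𝓝 p₁, (1 - p) ^ (N + 1) < p₂ :=
    (continuousAt_const.sub continuousAt_id).pow _ |>.eventually_lt continuousAt_const hN₁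
  have hN₂' : ∀ᶠ p in 𝓝 p₁, (1 - p₂) ^ (N + 1) < p := eventually_gt_nhds hN₂
  filter_upwards [Ioo_mem_nhds hp₁.1 hp₁.2, hN₁', hN₂'] with p hp hpN₁ hpN₂
  exact antitheticMeanProduct_eq_sum hp hp₂ hpN₁ hpN₂

theorem hasDerivAt_one_sub_pow_add_sub_one (k : ℕ) (c x : ℝ) :
    HasDerivAt (fun p : ℝ => (1 - p) ^ k + c - 1) (-(k * (1 - x) ^ (k - 1))) x :=
  ((((hasDerivAt_id' x).const_sub 1).fun_pow k).add_const c).sub_const 1 |>.congr_deriv (by ring)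

theorem eventually_pow_succ_lt {q a : ℝ} (hq₀ : 0 ≤ q) (hq₁ : q < 1) (ha : 0 < a) :
    ∀ᶠ N : ℕ in atTop, q ^ (N + 1) < a :=
  ((tendsto_pow_atTop_nhds_zero_of_lt_one hq₀ hq₁).comp (tendsto_add_atTop_nat 1)).eventually
    (gt_mem_nhds ha)

theorem partial_deriv_discontinuous_general (p₂ : ℝ) (hp₂ : p₂ ∈ Set.Ioo (0 : ℝ) 1)
    (pb₁ : ℝ) (hpb₁ : pb₁ ∈ Set.Ioo (0 : ℝ) 1)
    (i j : ℕ) (hi : 0 < i) (hj : 0 < j) (hij : 1 - (1 - pb₁) ^ i = (1 - p₂) ^ j) :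
    (∃ dL dR : ℝ, HasDerivWithinAt (antitheticMeanProduct p₂) dL (Set.Iio pb₁) pb₁ ∧
        HasDerivWithinAt (antitheticMeanProduct p₂) dR (Set.Ioi pb₁) pb₁ ∧ dL ≠ dR) ∧
      ¬ DifferentiableAt ℝ (fun p₁ =>
          (antitheticMeanProduct p₂ p₁ - ((1 - p₁) / p₁) * ((1 - p₂) / p₂)) /
            ((Real.sqrt (1 - p₁) / p₁) * (Real.sqrt (1 - p₂) / p₂))) pb₁ := by
  obtain ⟨hp₂₀, hp₂₁⟩ := hp₂
  obtain ⟨hpb₀, hpb₁⟩ := hpb₁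
  obtain ⟨N, hN₁, hN₂, hiN, hjN⟩ : ∃ N : ℕ, (1 - pb₁) ^ (N + 1) < p₂ ∧
      (1 - p₂) ^ (N + 1) < pb₁ ∧ i ≤ N ∧ j ≤ N :=
    ((eventually_pow_succ_lt (by linarith) (by linarith) hp₂₀).and
      ((eventually_pow_succ_lt (by linarith) (by linarith) hpb₀).and
        ((eventually_ge_atTop i).and (eventually_ge_atTop j)))).exists
  have hh := antitheticMeanProduct_eventuallyEq_sum ⟨hpb₀, hpb₁⟩ ⟨hp₂₀, hp₂₁⟩ hN₁ hN₂
  obtain ⟨dL, dR, hL, hR, hlt⟩ := exists_hasDerivWithinAt_Iio_Ioi_sum_max_zero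
    (s := Icc 1 N ×ˢ Icc 1 N) (i₀ := (i, j))
    (fun km _ => hasDerivAt_one_sub_pow_add_sub_one km.1 ((1 - p₂) ^ km.2) pb₁)
    (fun km hkm => neg_neg_of_pos <| mul_pos (by norm_cast; grind) (pow_pos (by linarith) _))
    (mem_product.2 ⟨mem_Icc.2 ⟨hi, hiN⟩, mem_Icc.2 ⟨hj, hjN⟩⟩) (by linarith)
  replace hL := hL.congr_of_eventuallyEq (hh.filter_mono nhdsWithin_le_nhds) hh.self_of_nhds
  replace hR := hR.congr_of_eventuallyEq (hh.filter_mono nhdsWithin_le_nhds) hh.self_of_nhds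
  refine ⟨⟨dL, dR, hL, hR, hlt.ne⟩, fun hρ => ?_⟩
  refine not_differentiableAt_of_hasDerivWithinAt_Iio_Ioi_s18 hL hR hlt.ne (hρ.of_div_sub ?_ ?_ ?_)
  · fun_prop (disch := positivity)
  · fun_prop (disch := first | positivity | linarith)
  · exact (mul_pos (div_pos (Real.sqrt_pos.2 (by linarith)) hpb₀)
      (div_pos (Real.sqrt_pos.2 (by linarith)) hp₂₀)).ne'

/-- Fix `p₂ ∈ (0,1)` and let `p̄₁ ∈ (0,1)` with `p̄₁ + p₂ < 1` be such that
`1 − (1−p̄₁)^i = (1−p₂)^j` for some positive integers `i, j`.  Then the one-sided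
derivatives of `h(p₁) = ∫₀¹ ⌊ln(1−u)/ln(1−p₁)⌋⌊ln u/ln(1−p₂)⌋ du` at `p̄₁` exist
and differ; consequently `p₁ ↦ ρ₋(p₁,p₂) = (h(p₁) − m₁m₂)/(σ₁σ₂)` is not
differentiable at `p̄₁`, i.e. `∂ρ₋/∂p₁` has a discontinuity there. -/
theorem partial_deriv_discontinuous (p₂ : ℝ) (hp₂ : p₂ ∈ Set.Ioo (0 : ℝ) 1)
    (pb₁ : ℝ) (hpb₁ : pb₁ ∈ Set.Ioo (0 : ℝ) 1) (hsum : pb₁ + p₂ < 1)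
    (i j : ℕ) (hi : 0 < i) (hj : 0 < j) (hij : 1 - (1 - pb₁) ^ i = (1 - p₂) ^ j) :
    (∃ dL dR : ℝ, HasDerivWithinAt (antitheticMeanProduct p₂) dL (Set.Iio pb₁) pb₁ ∧
        HasDerivWithinAt (antitheticMeanProduct p₂) dR (Set.Ioi pb₁) pb₁ ∧ dL ≠ dR) ∧
      ¬ DifferentiableAt ℝ (fun p₁ =>
          (antitheticMeanProduct p₂ p₁ - ((1 - p₁) / p₁) * ((1 - p₂) / p₂)) /
            ((Real.sqrt (1 - p₁) / p₁) * (Real.sqrt (1 - p₂) / p₂))) pb₁ :=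
  partial_deriv_discontinuous_general p₂ hp₂ pb₁ hpb₁ i j hi hj hij
end
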